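/- The expected proportion of surviving bottom-level vertices of a uniformly random partial automorphism decays exponentially: with p_n = R_n / (2^n N_n), one has p_n ≤ (3/4)^{n-1} p_1 for all n ≥ 1; in particular p_n → 0 as n → ∞. -/

import Mathlib

open scoped BigOperators

/-- A partial automorphism of the `n`-level binary rooted tree.  Vertices of the tree are
encoded as binary strings of length at most `n`: the root is the empty string and the two
children of a vertex `l` are `l ++ [b]` for `b : Bool`.  A partial automorphism is an
injective partial map (with `none` standing for "undefined") whose domain is a subtree
containing the root, which fixes the root and maps children of a vertex in its domain to
children of its image; equivalently, it is an isomorphism between two subtrees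
containing the root. -/
structure PartialAut (n : ℕ) where
  toFun : List Bool → Option (List Bool)
  length_le : ∀ l m, toFun l = some m → l.length ≤ n
  root_map : toFun [] = some []
  child_map : ∀ l b m, toFun (l ++ [b]) = some m →
      ∃ u b', toFun l = some u ∧ m = u ++ [b']
  inj : ∀ l l' m, toFun l = some m → toFun l' = some m → l = l'

namespace PartialAut

variable {n : ℕ}

theorem ext' {x y : PartialAut n} (h : x.toFun = y.toFun) : x = y := by
  cases x; cases y; cases h; rfl

theorem toFun_eq_none {x : PartialAut n} {l : List Bool} (h : ¬ l.length ≤ n) :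
    x.toFun l = none := by
  cases hx : x.toFun l with
  | none => rfl
  | some m => exact absurd (x.length_le l m hx) h

theorem length_map {x : PartialAut n} : ∀ l m : List Bool, x.toFun l = some m →
    m.length = l.length := by
  intro l
  induction l using List.reverseRecOn with
  | nil => intro m h; rw [x.root_map] at h; cases h; rfl
  | append_singleton l b ih =>
      intro m h
      obtain ⟨u, b', hu, rfl⟩ := x.child_map l b m h
      simp [ih u hu]

/-- Composition of partial automorphisms (first apply `x`, then `y`), together with the
identity automorphism, makes `PartialAut n` a monoid (in particular a semigroup). -/
instance : Monoid (PartialAut n) where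
  mul x y :=
    { toFun := fun l => (x.toFun l).bind y.toFun
      length_le := by
        intro l m h
        try dsimp only at h
        cases hx : x.toFun l with
        | none => rw [hx] at h; cases h
        | some k => exact x.length_le l k hx
      root_map := by (try dsimp only); rw [x.root_map]; simpa using y.root_map
      child_map := by
        intro l b m h
        try dsimp only at h ⊢
        cases hx : x.toFun (l ++ [b]) with
        | none => rw [hx] at h; cases h
        | some k =>
          rw [hx, Option.bind_some] at h
          obtain ⟨u, b', hu, rfl⟩ := x.child_map l b k hx
          obtain ⟨w, b'', hw, rfl⟩ := y.child_map u b' m h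
          exact ⟨w, b'', by rw [hu, Option.bind_some, hw], rfl⟩
      inj := by
        intro l l' m h h'
        try dsimp only at h h'
        cases hx : x.toFun l with
        | none => rw [hx] at h; cases h
        | some k =>
          cases hx' : x.toFun l' with
          | none => rw [hx'] at h'; cases h'
          | some k' =>
            rw [hx, Option.bind_some] at h
            rw [hx', Option.bind_some] at h'
            have hkk : k = k' := y.inj k k' m h h'
            subst hkk
            exact x.inj l l' k hx hx' }
  one :=
    { toFun := fun l => if l.length ≤ n then some l else none
      length_le := by
        intro l m h
        try dsimp only at h
        split at h
        · assumption
        · cases h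
      root_map := by simp
      child_map := by
        intro l b m h
        try dsimp only at h ⊢
        split at h
        · cases h
          have hl : l.length ≤ n := by
            simp only [List.length_append, List.length_cons, List.length_nil] at *
            omega
          exact ⟨l, b, by simp [hl], rfl⟩
        · cases h
      inj := by
        intro l l' m h h'
        try dsimp only at h h'
        split at h
        · cases h
          split at h'
          · cases h'; rfl
          · cases h'
        · cases h }
  mul_assoc x y z := ext' (funext fun l => Option.bind_assoc _ _ _)
  one_mul x := by
    apply ext'
    funext l
    by_cases hl : l.length ≤ n
    · show (if l.length ≤ n then some l else none).bind x.toFun = x.toFun l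
      simp [hl]
    · show (if l.length ≤ n then some l else none).bind x.toFun = x.toFun l
      simp [hl, toFun_eq_none hl]
  mul_one x := by
    apply ext'
    funext l
    show (x.toFun l).bind (fun m => if m.length ≤ n then some m else none) = x.toFun l
    cases hx : x.toFun l with
    | none => rfl
    | some m =>
      have hm : m.length ≤ n := (length_map l m hx) ▸ x.length_le l m hx
      simp [hm]

@[simp] theorem mul_toFun (x y : PartialAut n) (l : List Bool) :
    (x * y).toFun l = (x.toFun l).bind y.toFun := rfl

@[simp] theorem one_toFun (l : List Bool) :
    (1 : PartialAut n).toFun l = if l.length ≤ n then some l else none := rfl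

instance : Finite (PartialAut n) := by
  haveI hV : Finite {l : List Bool // l.length ≤ n} := (List.finite_length_le Bool n).to_subtype
  haveI := Fintype.ofFinite {l : List Bool // l.length ≤ n}
  apply Finite.of_injective
    (fun (x : PartialAut n) (v : {l : List Bool // l.length ≤ n}) =>
      (x.toFun v.1).bind fun m => if hm : m.length ≤ n then
        some (⟨m, hm⟩ : {l : List Bool // l.length ≤ n}) else none)
  intro x y h
  apply ext'
  funext l
  by_cases hl : l.length ≤ n
  · have h' := congrFun h ⟨l, hl⟩
    try dsimp only at h'
    cases hx : x.toFun l with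
    | none =>
      cases hy : y.toFun l with
      | none => rfl
      | some m =>
        have hm : m.length ≤ n := (length_map l m hy) ▸ y.length_le l m hy
        rw [hx, hy] at h'
        simp [hm] at h'
    | some m =>
      have hm : m.length ≤ n := (length_map l m hx) ▸ x.length_le l m hx
      cases hy : y.toFun l with
      | none =>
        rw [hx, hy] at h'
        simp [hm] at h'
      | some k =>
        have hk : k.length ≤ n := (length_map l k hy) ▸ y.length_le l k hy
        rw [hx, hy] at h'
        simp only [Option.bind_some, hm, hk, dif_pos] at h'
        rw [Option.some_inj, Subtype.mk.injEq] at h'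
        rw [h']
  · rw [toFun_eq_none hl, toFun_eq_none hl]

noncomputable instance : Fintype (PartialAut n) := Fintype.ofFinite _

end PartialAut

/-- The set of vertices of the `n`-th (bottom) level of the `n`-level binary rooted tree. -/
def Leaf (n : ℕ) : Type := {l : List Bool // l.length = n}

instance (n : ℕ) : DecidableEq (Leaf n) := fun a b =>
  decidable_of_iff (a.1 = b.1) Subtype.ext_iff.symm

instance (n : ℕ) : Finite (Leaf n) := by
  have : Finite {l : List Bool // l.length = n} := (List.finite_length_eq Bool n).to_subtype
  exact this

noncomputable instance (n : ℕ) : Fintype (Leaf n) := Fintype.ofFinite _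

/-- The domain of a partial automorphism. -/
def PartialAut.dom {n : ℕ} (x : PartialAut n) : Set (List Bool) := {l | x.toFun l ≠ none}

/-- `N_n`, the number of elements of the semigroup `P_n`. -/
noncomputable def Nn (n : ℕ) : ℕ := Nat.card (PartialAut n)

/-- `S_n(x)`: the bottom-level vertices surviving all iterates of `x`. -/
def survSet {n : ℕ} (x : PartialAut n) : Set (List Bool) :=
  {l | l.length = n ∧ ∀ m : ℕ, 1 ≤ m → l ∈ (x ^ m).dom}

/-- The ultimate rank `rk_n(x) = |S_n(x)|`. -/
noncomputable def urk {n : ℕ} (x : PartialAut n) : ℕ := Nat.card (survSet x)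

/-- The total ultimate rank `R_n`. -/
noncomputable def Rn (n : ℕ) : ℕ := ∑ x : PartialAut n, urk x

/-- `rank_n(x) = |dom(x) ∩ B_n|`. -/
noncomputable def lrank {n : ℕ} (x : PartialAut n) : ℕ :=
  Nat.card {l : List Bool | l ∈ x.dom ∧ l.length = n}

/-- The total rank `R'_n`. -/
noncomputable def Rn' (n : ℕ) : ℕ := ∑ x : PartialAut n, lrank x

/-- The action matrix `A_x` of `x` on the bottom level of the tree. -/
noncomputable def actionMatrix {n : ℕ} (x : PartialAut n) : Matrix (Leaf n) (Leaf n) ℂ :=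
  fun i j => if x.toFun i.1 = some j.1 then 1 else 0

/-- The multiset of eigenvalues (with multiplicity) of the action matrix of `x`,
i.e. the roots of its characteristic polynomial. -/
noncomputable def eigenvalues {n : ℕ} (x : PartialAut n) : Multiset ℂ :=
  (actionMatrix x).charpoly.roots

/-- `∫_D f dΞ_n` for the empirical eigenvalue measure
`Ξ_n = 2^{-n} ∑_k δ_{λ_k}` of `x`. -/
noncomputable def specInt {n : ℕ} (x : PartialAut n) (f : ℂ → ℂ) : ℂ :=
  (2 ^ n : ℂ)⁻¹ * ((eigenvalues x).map f).sum

/-- `p_n = R_n / (2^n N_n)`. -/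
noncomputable def pn (n : ℕ) : ℝ := (Rn n : ℝ) / (2 ^ n * Nn n)

/-- The idempotent partial automorphism which is the identity on `dom x`. -/
def PartialAut.domIdem {n : ℕ} (x : PartialAut n) : PartialAut n where
  toFun l := if x.toFun l = none then none else some l
  length_le := by
    intro l m h
    try dsimp only at h
    split at h
    · cases h
    · next hx =>
      cases hk : x.toFun l with
      | none => exact absurd hk hx
      | some k => exact x.length_le l k hk
  root_map := by simp [x.root_map]
  child_map := by
    intro l b m h
    try dsimp only at h ⊢
    split at h
    · cases h
    · next hx =>
      cases h
      cases hk : x.toFun (l ++ [b]) with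
      | none => exact absurd hk hx
      | some k =>
        obtain ⟨u, b', hu, _⟩ := x.child_map l b k hk
        exact ⟨l, b, by simp [hu], rfl⟩
  inj := by
    intro l l' m h h'
    try dsimp only at h h'
    split at h
    · cases h
    · cases h
      split at h'
      · cases h'
      · cases h'; rfl

/-! ### Auxiliary development for the main theorem -/

namespace PnAux

open PartialAut

variable {n : ℕ}

/-- If `x` is defined on `l ++ l'`, it is defined on the prefix `l`. -/
theorem prefix_some (x : PartialAut n) (l : List Bool) :
    ∀ l' m, x.toFun (l ++ l') = some m → ∃ m₁ m₂, x.toFun l = some m₁ ∧ m = m₁ ++ m₂ := by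
  intro l'
  induction l' using List.reverseRecOn with
  | nil => intro m h; exact ⟨m, [], by simpa using h, by simp⟩
  | append_singleton l'' b ih =>
    intro m h
    rw [← List.append_assoc] at h
    obtain ⟨u, b', hu, rfl⟩ := x.child_map _ b m h
    obtain ⟨m₁, m₂, h1, rfl⟩ := ih u hu
    exact ⟨m₁, m₂ ++ [b'], h1, by simp⟩

/-- The level-one action of a partial automorphism of `T_{n+1}`. -/
def lvl1 (x : PartialAut (n + 1)) (b : Bool) : Option Bool :=
  (x.toFun [b]).bind List.head?

theorem toFun_single (x : PartialAut (n + 1)) (b : Bool) :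
    x.toFun [b] = (lvl1 x b).map fun c => [c] := by
  unfold lvl1
  cases hx : x.toFun [b] with
  | none => rfl
  | some m =>
    have hm : m.length = 1 := by simpa using x.length_map _ _ hx
    match m, hm with
    | [c], _ => rfl

theorem lvl1_eq_none {x : PartialAut (n + 1)} {b : Bool} :
    lvl1 x b = none ↔ x.toFun [b] = none := by
  rw [toFun_single x b]; cases lvl1 x b <;> simp

theorem lvl1_eq_some {x : PartialAut (n + 1)} {b c : Bool} :
    lvl1 x b = some c ↔ x.toFun [b] = some [c] := by
  rw [toFun_single x b]; cases lvl1 x b <;> simp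

theorem lvl1_inj {x : PartialAut (n + 1)} {b b' c : Bool} (h : lvl1 x b = some c)
    (h' : lvl1 x b' = some c) : b = b' := by
  rw [lvl1_eq_some] at h h'
  have := x.inj _ _ _ h h'
  simpa using this

/-- Strips the first letter of an optional list. -/
def strip : Option (List Bool) → Option (List Bool)
  | none => none
  | some [] => none
  | some (_ :: m) => some m

theorem strip_eq_some {o : Option (List Bool)} {m : List Bool} :
    strip o = some m ↔ ∃ c, o = some (c :: m) := by
  match o with
  | none => simp [strip]
  | some [] => simp [strip]
  | some (c :: m') => simp only [strip, Option.some_inj]; constructor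
                      · rintro rfl; exact ⟨c, rfl⟩
                      · rintro ⟨c', h⟩; cases h; rfl

/-- The action of `x` on the subtree above the level-one vertex `b`
(the identity if `b` is not in the domain). -/
def subAt (x : PartialAut (n + 1)) (b : Bool) : PartialAut n :=
  if hx : x.toFun [b] = none then 1 else
  { toFun := fun l => strip (x.toFun (b :: l))
    length_le := by
      intro l m h
      obtain ⟨c, hc⟩ := strip_eq_some.1 h
      have := x.length_le _ _ hc
      simp only [List.length_cons] at this
      omega
    root_map := by
      obtain ⟨c, hc⟩ : ∃ c, lvl1 x b = some c := by
        cases h : lvl1 x b with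
        | none => exact absurd (lvl1_eq_none.1 h) hx
        | some c => exact ⟨c, rfl⟩
      rw [lvl1_eq_some] at hc
      show strip (x.toFun [b]) = some []
      rw [hc]; rfl
    child_map := by
      intro l b' m h
      obtain ⟨c, hc⟩ := strip_eq_some.1 h
      have hc' : x.toFun ((b :: l) ++ [b']) = some (c :: m) := by
        simpa using hc
      obtain ⟨u, b'', hu, hm⟩ := x.child_map _ b' _ hc'
      have hlen : u.length = l.length + 1 := by
        simpa using x.length_map _ _ hu
      match u, hlen with
      | c₀ :: u', _ =>
        have hc0 : c₀ = c ∧ m = u' ++ [b''] := by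
          have : c :: m = c₀ :: (u' ++ [b'']) := by simpa using hm
          simp only [List.cons.injEq] at this
          exact ⟨this.1.symm, this.2⟩
        refine ⟨u', b'', ?_, hc0.2⟩
        show strip (x.toFun (b :: l)) = some u'
        rw [hu]; rfl
    inj := by
      intro l l' m h h'
      obtain ⟨c, hc⟩ := strip_eq_some.1 h
      obtain ⟨c', hc'⟩ := strip_eq_some.1 h'
      have e1 : x.toFun ([b] ++ l) = some (c :: m) := by simpa using hc
      have e2 : x.toFun ([b] ++ l') = some (c' :: m) := by simpa using hc'
      obtain ⟨m₁, m₂, hm₁, hmm⟩ := prefix_some x [b] l _ e1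
      obtain ⟨m₁', m₂', hm₁', hmm'⟩ := prefix_some x [b] l' _ e2
      rw [hm₁] at hm₁'
      have hm11 : m₁ = m₁' := Option.some_inj.1 hm₁'
      subst hm11
      have hlen₁ : m₁.length = 1 := by simpa using x.length_map _ _ hm₁
      match m₁, hmm, hmm', hm₁, hlen₁ with
      | [c₀], hmm, hmm', hm₁, _ =>
        have hcc : c = c₀ := by simpa using congrArg List.head? hmm
        have hcc' : c' = c₀ := by simpa using congrArg List.head? hmm'
        subst hcc; subst hcc'
        have := x.inj (b :: l) (b :: l') _ hc hc'
        simpa using this }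

theorem subAt_of_none {x : PartialAut (n + 1)} {b : Bool} (h : x.toFun [b] = none) :
    subAt x b = 1 := by
  unfold subAt; rw [dif_pos h]

theorem subAt_toFun {x : PartialAut (n + 1)} {b : Bool} (h : x.toFun [b] ≠ none)
    (l : List Bool) : (subAt x b).toFun l = strip (x.toFun (b :: l)) := by
  unfold subAt; rw [dif_neg h]

theorem recon_none {x : PartialAut (n + 1)} {b : Bool} (h : lvl1 x b = none) (l : List Bool) :
    x.toFun (b :: l) = none := by
  by_contra hne
  obtain ⟨m, hm⟩ := Option.ne_none_iff_exists'.1 hne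
  have : x.toFun ([b] ++ l) = some m := by simpa using hm
  obtain ⟨m₁, m₂, hm₁, _⟩ := prefix_some x [b] l _ this
  rw [lvl1_eq_none.1 h] at hm₁
  cases hm₁

theorem recon_some {x : PartialAut (n + 1)} {b c : Bool} (h : lvl1 x b = some c) (l : List Bool) :
    x.toFun (b :: l) = ((subAt x b).toFun l).map (c :: ·) := by
  have hb : x.toFun [b] = some [c] := lvl1_eq_some.1 h
  have hbne : x.toFun [b] ≠ none := by rw [hb]; exact Option.some_ne_none _
  rw [subAt_toFun hbne]
  cases hx : x.toFun (b :: l) with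
  | none => simp [strip]
  | some m =>
    have : x.toFun ([b] ++ l) = some m := by simpa using hx
    obtain ⟨m₁, m₂, hm₁, rfl⟩ := prefix_some x [b] l _ this
    rw [hb] at hm₁
    have hm : m₁ = [c] := by exact (Option.some_inj.1 hm₁).symm
    subst hm
    simp [strip]

theorem toFun_cons_eq_none {x : PartialAut (n + 1)} {b c : Bool} (h : lvl1 x b = some c)
    {l : List Bool} : x.toFun (b :: l) = none ↔ (subAt x b).toFun l = none := by
  rw [recon_some h l]
  cases (subAt x b).toFun l <;> simp

theorem lvl1_mul (x y : PartialAut (n + 1)) (b : Bool) :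
    lvl1 (x * y) b = (lvl1 x b).bind (lvl1 y) := by
  cases h : lvl1 x b with
  | none =>
    have : (x * y).toFun [b] = none := by
      rw [mul_toFun, lvl1_eq_none.1 h]; rfl
    rw [lvl1_eq_none.2 this]; rfl
  | some c =>
    show lvl1 (x * y) b = lvl1 y c
    unfold lvl1
    rw [mul_toFun, lvl1_eq_some.1 h, Option.bind_some]

theorem subAt_mul {x y : PartialAut (n + 1)} {b c : Bool} (hx : lvl1 x b = some c)
    (hy : lvl1 y c ≠ none) : subAt (x * y) b = subAt x b * subAt y c := by
  obtain ⟨d, hd⟩ := Option.ne_none_iff_exists'.1 hy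
  have hyc : y.toFun [c] = some [d] := lvl1_eq_some.1 hd
  have hycne : y.toFun [c] ≠ none := by rw [hyc]; exact Option.some_ne_none _
  have hxyne : (x * y).toFun [b] ≠ none := by
    rw [mul_toFun, lvl1_eq_some.1 hx, Option.bind_some, hyc]
    exact Option.some_ne_none _
  apply PartialAut.ext'
  funext l
  rw [mul_toFun, subAt_toFun hxyne, mul_toFun]
  cases hxl : (subAt x b).toFun l with
  | none =>
    have : x.toFun (b :: l) = none := by rw [recon_some hx l, hxl]; rfl
    rw [this, Option.bind_none, Option.bind_none]; rfl
  | some m =>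
    have : x.toFun (b :: l) = some (c :: m) := by rw [recon_some hx l, hxl]; rfl
    rw [this, Option.bind_some, Option.bind_some, subAt_toFun hycne]

theorem lvl1_one (b : Bool) : lvl1 (1 : PartialAut (n + 1)) b = some b := by
  unfold lvl1
  rw [one_toFun]
  simp

theorem subAt_one (b : Bool) : subAt (1 : PartialAut (n + 1)) b = 1 := by
  have h1 : (1 : PartialAut (n + 1)).toFun [b] ≠ none := by
    rw [one_toFun]; simp
  apply PartialAut.ext'
  funext l
  rw [subAt_toFun h1, one_toFun, one_toFun]
  by_cases hl : l.length ≤ n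
  · have : (b :: l).length ≤ n + 1 := by simp; omega
    rw [if_pos this, if_pos hl]; rfl
  · have : ¬ (b :: l).length ≤ n + 1 := by simp; omega
    rw [if_neg this, if_neg hl]; rfl

/-- Extensionality via the level-one action and the subtree actions. -/
theorem ext_of {x x' : PartialAut (n + 1)} (h1 : ∀ b, lvl1 x b = lvl1 x' b)
    (h2 : ∀ b, subAt x b = subAt x' b) : x = x' := by
  apply PartialAut.ext'
  funext l
  match l with
  | [] => rw [x.root_map, x'.root_map]
  | b :: l =>
    cases hc : lvl1 x b with
    | none => rw [recon_none hc l, recon_none ((h1 b) ▸ hc) l]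
    | some c => rw [recon_some hc l, recon_some ((h1 b) ▸ hc) l, h2 b]

/-- Builds a partial automorphism of `T_{n+1}` from a level-one partial injection `σ`
and subtree maps. -/
def glue (σ : Bool → Option Bool)
    (hσ : ∀ b b' c, σ b = some c → σ b' = some c → b = b')
    (h : Bool → PartialAut n) : PartialAut (n + 1) where
  toFun l :=
    match l with
    | [] => some []
    | b :: l => match σ b with
      | none => none
      | some c => ((h b).toFun l).map (c :: ·)
  length_le := by
    intro l m hm
    match l with
    | [] => simp
    | b :: l =>
      simp only at hm
      cases hc : σ b with
      | none => rw [hc] at hm; cases hm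
      | some c =>
        rw [hc] at hm
        cases hl : (h b).toFun l with
        | none => rw [hl] at hm; cases hm
        | some m' =>
          have := (h b).length_le _ _ hl
          simp only [List.length_cons]; omega
  root_map := rfl
  child_map := by
    intro l b' m hm
    match l with
    | [] =>
      simp only [List.nil_append] at hm ⊢
      cases hc : σ b' with
      | none => rw [hc] at hm; cases hm
      | some c =>
        rw [hc] at hm
        cases hl : (h b').toFun [] with
        | none => rw [hl] at hm; cases hm
        | some m' =>
          rw [hl] at hm
          rw [(h b').root_map] at hl
          cases hl
          cases hm
          exact ⟨[], c, rfl, rfl⟩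
    | b :: l =>
      have hconc : (b :: l) ++ [b'] = b :: (l ++ [b']) := rfl
      rw [hconc] at hm
      simp only at hm
      cases hc : σ b with
      | none => rw [hc] at hm; cases hm
      | some c =>
        rw [hc] at hm
        cases hl : (h b).toFun (l ++ [b']) with
        | none => rw [hl] at hm; cases hm
        | some m' =>
          rw [hl] at hm
          cases hm
          obtain ⟨u, b'', hu, rfl⟩ := (h b).child_map _ _ _ hl
          refine ⟨c :: u, b'', ?_, rfl⟩
          show (match σ b with
            | none => none
            | some c => (((h b).toFun l).map (c :: ·))) = some (c :: u)
          rw [hc, hu]; rfl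
  inj := by
    intro l l' m hm hm'
    match l, l' with
    | [], [] => rfl
    | [], b :: t =>
      simp only at hm hm'
      cases hm
      cases hc : σ b with
      | none => rw [hc] at hm'; cases hm'
      | some c =>
        rw [hc] at hm'
        cases hl : (h b).toFun t with
        | none => rw [hl] at hm'; cases hm'
        | some m' => rw [hl] at hm'; cases hm'
    | b :: t, [] =>
      simp only at hm hm'
      cases hm'
      cases hc : σ b with
      | none => rw [hc] at hm; cases hm
      | some c =>
        rw [hc] at hm
        cases hl : (h b).toFun t with
        | none => rw [hl] at hm; cases hm
        | some m' => rw [hl] at hm; cases hm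
    | b :: t, b' :: t' =>
      simp only at hm hm'
      cases hc : σ b with
      | none => rw [hc] at hm; cases hm
      | some c =>
        cases hc' : σ b' with
        | none => rw [hc'] at hm'; cases hm'
        | some c' =>
          rw [hc] at hm; rw [hc'] at hm'
          cases hl : (h b).toFun t with
          | none => rw [hl] at hm; cases hm
          | some m1 =>
            cases hl' : (h b').toFun t' with
            | none => rw [hl'] at hm'; cases hm'
            | some m2 =>
              rw [hl] at hm; rw [hl'] at hm'
              cases hm
              have hcm : c' :: m2 = c :: m1 := by
                simpa using hm'
              simp only [List.cons.injEq] at hcm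
              obtain ⟨rfl, rfl⟩ := hcm
              have hbb : b = b' := hσ b b' _ hc hc'
              subst hbb
              have := (h b).inj _ _ _ hl hl'
              rw [this]

theorem lvl1_glue (σ : Bool → Option Bool) (hσ : ∀ b b' c, σ b = some c → σ b' = some c → b = b')
    (h : Bool → PartialAut n) (b : Bool) : lvl1 (glue σ hσ h) b = σ b := by
  unfold lvl1
  show (match σ b with
    | none => none
    | some c => (((h b).toFun []).map (c :: ·))).bind List.head? = σ b
  cases hc : σ b with
  | none => rfl
  | some c => rw [(h b).root_map]; rfl

theorem subAt_glue (σ : Bool → Option Bool) (hσ : ∀ b b' c, σ b = some c → σ b' = some c → b = b')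
    (h : Bool → PartialAut n) {b c : Bool} (hc : σ b = some c) :
    subAt (glue σ hσ h) b = h b := by
  have hne : (glue σ hσ h).toFun [b] ≠ none := by
    intro hno
    have h2 := lvl1_eq_none.2 hno
    rw [lvl1_glue, hc] at h2
    cases h2
  apply PartialAut.ext'
  funext l
  rw [subAt_toFun hne]
  show strip (match σ b with
    | none => none
    | some c => (((h b).toFun l).map (c :: ·))) = (h b).toFun l
  rw [hc]
  cases (h b).toFun l <;> rfl

/-- Domains of powers are decreasing. -/
theorem pow_toFun_ne_none_mono {x : PartialAut n} {l : List Bool} {m m' : ℕ} (h : m ≤ m')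
    (hne : (x ^ m').toFun l ≠ none) : (x ^ m).toFun l ≠ none := by
  obtain ⟨d, rfl⟩ := Nat.exists_eq_add_of_le h
  rw [pow_add, mul_toFun] at hne
  cases hx : (x ^ m).toFun l with
  | none => rw [hx] at hne; simp at hne
  | some k => exact Option.some_ne_none _

theorem lvl1_pow_fix {z : PartialAut (n + 1)} {b : Bool} (h : lvl1 z b = some b) (m : ℕ) :
    lvl1 (z ^ m) b = some b ∧ subAt (z ^ m) b = (subAt z b) ^ m := by
  induction m with
  | zero => simp [pow_zero, lvl1_one, subAt_one]
  | succ m ih =>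
    constructor
    · rw [pow_succ', lvl1_mul, h, Option.bind_some, ih.1]
    · rw [pow_succ', subAt_mul h (by rw [ih.1]; exact Option.some_ne_none _), ih.2, pow_succ']

/-- The cone above a level-one fixed point. -/
theorem cone_fix {z : PartialAut (n + 1)} {b : Bool} (h : lvl1 z b = some b) :
    {l : List Bool | (b :: l) ∈ survSet z} = survSet (subAt z b) := by
  ext l
  simp only [survSet, Set.mem_setOf_eq, PartialAut.dom, ne_eq, List.length_cons,
    Nat.add_right_cancel_iff]
  have key : ∀ (m : ℕ) (l : List Bool), (z ^ m).toFun (b :: l) = none ↔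
      ((subAt z b) ^ m).toFun l = none := fun m l => by
    rw [toFun_cons_eq_none (lvl1_pow_fix h m).1, (lvl1_pow_fix h m).2]
  constructor
  · rintro ⟨hlen, hall⟩
    exact ⟨hlen, fun m hm hno => hall m hm ((key m l).2 hno)⟩
  · rintro ⟨hlen, hall⟩
    exact ⟨hlen, fun m hm hno => hall m hm ((key m l).1 hno)⟩

/-- The cone above a point of a level-one 2-cycle. -/
theorem cone_swap {z : PartialAut (n + 1)} {b : Bool} (h1 : lvl1 z b = some (!b))
    (h2 : lvl1 z (!b) = some b) :
    {l : List Bool | (b :: l) ∈ survSet z} = survSet (subAt z b * subAt z (!b)) := by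
  have hz2l : lvl1 (z * z) b = some b := by
    rw [lvl1_mul, h1, Option.bind_some, h2]
  have hz2s : subAt (z * z) b = subAt z b * subAt z (!b) :=
    subAt_mul h1 (by rw [h2]; exact Option.some_ne_none _)
  have key : ∀ (m : ℕ) (l : List Bool), (z ^ (2 * m)).toFun (b :: l) = none ↔
      ((subAt z b * subAt z (!b)) ^ m).toFun l = none := fun m l => by
    have hp := lvl1_pow_fix hz2l m
    rw [pow_mul, pow_two, toFun_cons_eq_none hp.1, hp.2, hz2s]
  ext l
  simp only [survSet, Set.mem_setOf_eq, PartialAut.dom, ne_eq, List.length_cons,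
    Nat.add_right_cancel_iff]
  constructor
  · rintro ⟨hlen, hall⟩
    exact ⟨hlen, fun m hm hno => hall (2 * m) (by omega) ((key m l).2 hno)⟩
  · rintro ⟨hlen, hall⟩
    refine ⟨hlen, fun m hm => ?_⟩
    exact pow_toFun_ne_none_mono (by omega : m ≤ 2 * m)
      (fun hno => hall m hm ((key m l).1 hno))

/-- Dead cones. -/
theorem cone_dead {z : PartialAut (n + 1)} {b : Bool}
    (h : lvl1 z b = none ∨ (lvl1 z b = some (!b) ∧ lvl1 z (!b) ≠ some b)) :
    {l : List Bool | (b :: l) ∈ survSet z} = ∅ := by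
  ext l
  simp only [survSet, Set.mem_setOf_eq, PartialAut.dom, ne_eq, Set.mem_empty_iff_false,
    iff_false, not_and]
  intro _hlen hall
  rcases h with h | ⟨hb, hnb⟩
  · have := hall 1 le_rfl
    rw [pow_one] at this
    exact this (recon_none h l)
  · have hnb' : lvl1 z (!b) = none := by
      cases hd : lvl1 z (!b) with
      | none => rfl
      | some d =>
        exfalso
        have hdb : d = b ∨ d = !b := by cases d <;> cases b <;> simp
        rcases hdb with rfl | rfl
        · exact hnb hd
        · have := lvl1_inj hb hd
          cases b <;> simp at this
    have h2 : lvl1 (z * z) b = none := by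
      rw [lvl1_mul, hb, Option.bind_some, hnb']
    have := hall 2 (by omega)
    rw [show (2 : ℕ) = 1 + 1 by rfl, pow_add, pow_one] at this
    exact this (recon_none h2 l)

/-- Splitting the ultimate rank along the two level-one cones. -/
theorem urk_split (z : PartialAut (n + 1)) :
    urk z = Nat.card {l : List Bool | (false :: l) ∈ survSet z}
          + Nat.card {l : List Bool | (true :: l) ∈ survSet z} := by
  classical
  have hA : ∀ b : Bool, {l : List Bool | (b :: l) ∈ survSet z}.Finite := by
    intro b
    apply (List.finite_length_eq Bool n).subset
    intro l hl
    have : (b :: l).length = n + 1 := hl.1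
    simpa using this
  have hsplit : survSet z =
      (List.cons false '' {l | (false :: l) ∈ survSet z}) ∪
      (List.cons true '' {l | (true :: l) ∈ survSet z}) := by
    ext m
    constructor
    · intro hm
      have hlen : m.length = n + 1 := hm.1
      cases m with
      | nil => simp at hlen
      | cons b t =>
        cases b
        · exact Or.inl ⟨t, hm, rfl⟩
        · exact Or.inr ⟨t, hm, rfl⟩
    · rintro (⟨t, ht, rfl⟩ | ⟨t, ht, rfl⟩) <;> exact ht
  have hinj : ∀ b : Bool, Function.Injective (List.cons b) := by
    intro b l l' h
    simpa using h
  have hdisj : Disjoint (List.cons false '' {l | (false :: l) ∈ survSet z})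
      (List.cons true '' {l | (true :: l) ∈ survSet z}) := by
    rw [Set.disjoint_left]
    rintro m ⟨t, _, rfl⟩ ⟨t', _, h⟩
    simp at h
  show Nat.card (survSet z) = _
  have key : (survSet z).ncard = Nat.card {l : List Bool | (false :: l) ∈ survSet z}
      + Nat.card {l : List Bool | (true :: l) ∈ survSet z} := by
    rw [Nat.card_coe_set_eq, Nat.card_coe_set_eq]
    calc (survSet z).ncard
        = ((List.cons false '' {l | (false :: l) ∈ survSet z}) ∪
            (List.cons true '' {l | (true :: l) ∈ survSet z})).ncard := by rw [← hsplit]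
      _ = (List.cons false '' {l | (false :: l) ∈ survSet z}).ncard
          + (List.cons true '' {l | (true :: l) ∈ survSet z}).ncard :=
            Set.ncard_union_eq hdisj ((hA false).image _) ((hA true).image _)
      _ = _ := by
            rw [Set.ncard_image_of_injective _ (hinj false),
              Set.ncard_image_of_injective _ (hinj true)]
  rw [Nat.card_coe_set_eq, key]

/-- Follows the level-one path of a word, collecting the subtree maps along the way. -/
def ret : List (PartialAut (n + 1)) → Bool → Option (Bool × List (PartialAut n))
  | [], b => some (b, [])
  | x :: t, b =>
    match lvl1 x b with
    | none => none
    | some c => (ret t c).map fun p => (p.1, subAt x b :: p.2)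

theorem ret_spec : ∀ (xs : List (PartialAut (n + 1))) (b d : Bool) (w : List (PartialAut n)),
    ret xs b = some (d, w) → lvl1 xs.prod b = some d ∧ subAt xs.prod b = w.prod := by
  intro xs
  induction xs with
  | nil =>
    intro b d w h
    obtain ⟨rfl, rfl⟩ : b = d ∧ ([] : List (PartialAut n)) = w := by
      simpa [ret] using h
    simp [lvl1_one, subAt_one]
  | cons x t ih =>
    intro b d w h
    simp only [ret] at h
    split at h
    · cases h
    · rename_i c hc
      rw [Option.map_eq_some_iff] at h
      obtain ⟨p, hp, hpe⟩ := h
      obtain ⟨rfl, rfl⟩ : p.1 = d ∧ subAt x b :: p.2 = w := by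
        simpa using hpe
      obtain ⟨ih1, ih2⟩ := ih c p.1 p.2 (by simpa using hp)
      constructor
      · rw [List.prod_cons, lvl1_mul, hc, Option.bind_some, ih1]
      · rw [List.prod_cons, subAt_mul hc (by rw [ih1]; exact Option.some_ne_none _), ih2,
          List.prod_cons]

theorem ret_none : ∀ (xs : List (PartialAut (n + 1))) (b : Bool),
    ret xs b = none → lvl1 xs.prod b = none := by
  intro xs
  induction xs with
  | nil => intro b h; simp [ret] at h
  | cons x t ih =>
    intro b h
    simp only [ret] at h
    rw [List.prod_cons, lvl1_mul]
    split at h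
    · rename_i hc
      rw [hc]; rfl
    · rename_i c hc
      rw [Option.map_eq_none_iff] at h
      rw [hc, Option.bind_some]
      exact ih c h

/-- Follows both level-one paths simultaneously; defined only along words all of whose
relevant letters act by level-one permutations. -/
def ret2 : List (PartialAut (n + 1)) → Bool →
    Option (Bool × List (PartialAut n) × List (PartialAut n))
  | [], b => some (b, [], [])
  | x :: t, b =>
    match lvl1 x b with
    | none => none
    | some c =>
      if lvl1 x (!b) = some (!c) then
        (ret2 t c).map fun p => (p.1, subAt x b :: p.2.1, subAt x (!b) :: p.2.2)
      else none

theorem ret2_spec : ∀ (xs : List (PartialAut (n + 1))) (b d : Bool)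
    (w w' : List (PartialAut n)), ret2 xs b = some (d, w, w') →
    ret xs b = some (d, w) ∧ ret xs (!b) = some (!d, w') := by
  intro xs
  induction xs with
  | nil =>
    intro b d w w' h
    obtain ⟨rfl, rfl, rfl⟩ : b = d ∧ ([] : List (PartialAut n)) = w ∧
        ([] : List (PartialAut n)) = w' := by simpa [ret2] using h
    exact ⟨rfl, rfl⟩
  | cons x t ih =>
    intro b d w w' h
    simp only [ret2] at h
    split at h
    · cases h
    · rename_i c hc
      split at h
      · rename_i hc'
        rw [Option.map_eq_some_iff] at h
        obtain ⟨p, hp, hpe⟩ := h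
        obtain ⟨rfl, rfl, rfl⟩ : p.1 = d ∧ subAt x b :: p.2.1 = w ∧
            subAt x (!b) :: p.2.2 = w' := by simpa using hpe
        obtain ⟨ih1, ih2⟩ := ih c p.1 p.2.1 p.2.2 (by simpa using hp)
        constructor
        · have he : ret (x :: t) b = (ret t c).map fun p : Bool × List (PartialAut n) =>
              (p.1, subAt x b :: p.2) := by simp [ret, hc]
          rw [he, ih1]; rfl
        · have he : ret (x :: t) (!b) = (ret t (!c)).map fun p : Bool × List (PartialAut n) =>
              (p.1, subAt x (!b) :: p.2) := by simp [ret, hc']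
          rw [he, ih2]; rfl
      · cases h

theorem ret2_isSome : ∀ (xs : List (PartialAut (n + 1))) (b : Bool),
    lvl1 xs.prod b ≠ none → lvl1 xs.prod (!b) ≠ none → (ret2 xs b).isSome := by
  intro xs
  induction xs with
  | nil => intro b _ _; simp [ret2]
  | cons x t ih =>
    intro b hb hnb
    rw [List.prod_cons, lvl1_mul] at hb hnb
    cases hc : lvl1 x b with
    | none => rw [hc] at hb; simp at hb
    | some c =>
      cases hc' : lvl1 x (!b) with
      | none => rw [hc'] at hnb; simp at hnb
      | some c' =>
        rw [hc, Option.bind_some] at hb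
        rw [hc', Option.bind_some] at hnb
        have hne : c' ≠ c := by
          intro hcc
          subst hcc
          have := lvl1_inj hc hc'
          cases b <;> simp at this
        have hc'' : c' = !c := by
          cases c <;> cases c' <;> first | rfl | exact absurd rfl hne
        subst hc''
        have hih := ih c hb (by simpa using hnb)
        have he : ret2 (x :: t) b =
            (ret2 t c).map fun p : Bool × List (PartialAut n) × List (PartialAut n) =>
              (p.1, subAt x b :: p.2.1, subAt x (!b) :: p.2.2) := by
          simp [ret2, hc, hc']
        rw [he]
        cases hr : ret2 t c with
        | none => rw [hr] at hih; simp at hih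
        | some p => simp

/-- Path-data upper-bound terms. -/
def AtermF (F : PartialAut n → ℕ) (t : Bool) (xs : List (PartialAut (n + 1))) (s : Bool) : ℕ :=
  ((ret xs s).map (fun p => if p.1 = t then F p.2.prod else 0)).getD 0

def BtermF (F : PartialAut n → PartialAut n → ℕ) (t : Bool)
    (xs : List (PartialAut (n + 1))) (s : Bool) : ℕ :=
  ((ret2 xs s).map (fun p => if p.1 = t then F p.2.1.prod p.2.2.prod else 0)).getD 0

/-- The pointwise bound for the count of one cone in terms of the path data. -/
theorem cone_card_le (xs : List (PartialAut (n + 1))) (b : Bool) :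
    Nat.card {l : List Bool | (b :: l) ∈ survSet xs.prod} ≤
      AtermF urk b xs b + BtermF (fun a a' => urk (a * a')) (!b) xs b := by
  classical
  cases hr : ret xs b with
  | none =>
    have h0 : {l : List Bool | (b :: l) ∈ survSet xs.prod} = ∅ :=
      cone_dead (Or.inl (ret_none xs b hr))
    rw [h0]
    simp [Nat.card_coe_set_eq]
  | some p =>
    obtain ⟨d, w⟩ := p
    obtain ⟨hd, hw⟩ := ret_spec xs b d w hr
    by_cases hdb : d = b
    · subst hdb
      rw [cone_fix hd]
      have h1 : Nat.card (survSet (subAt xs.prod d)) = urk w.prod := by rw [hw]; rfl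
      rw [h1]
      have h2 : AtermF urk d xs d = urk w.prod := by simp [AtermF, hr]
      exact h2 ▸ Nat.le_add_right _ _
    · have hdb' : d = !b := by cases d <;> cases b <;> simp_all
      subst hdb'
      by_cases h2 : lvl1 xs.prod (!b) = some b
      · have hsome := ret2_isSome xs b (by rw [hd]; exact Option.some_ne_none _)
          (by rw [h2]; exact Option.some_ne_none _)
        obtain ⟨q, hq⟩ := Option.isSome_iff_exists.1 hsome
        obtain ⟨d₂, w₂, w₂'⟩ := q
        obtain ⟨hq1, hq2⟩ := ret2_spec xs b d₂ w₂ w₂' hq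
        rw [hr] at hq1
        have hpair := Option.some_inj.1 hq1
        have he1 : d₂ = !b := (congrArg Prod.fst hpair).symm
        have he2 : w₂ = w := (congrArg Prod.snd hpair).symm
        subst he1
        subst he2
        obtain ⟨_, hw2'⟩ := ret_spec xs (!b) _ _ hq2
        rw [cone_swap hd h2]
        have hcard : Nat.card (survSet (subAt xs.prod b * subAt xs.prod (!b)))
            = urk (w₂.prod * w₂'.prod) := by rw [hw, hw2']; rfl
        rw [hcard]
        have hB : BtermF (fun a a' => urk (a * a')) (!b) xs b = urk (w₂.prod * w₂'.prod) := by
          simp [BtermF, hq]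
        exact hB ▸ Nat.le_add_left _ _
      · have h0 : {l : List Bool | (b :: l) ∈ survSet xs.prod} = ∅ :=
          cone_dead (Or.inr ⟨hd, h2⟩)
        rw [h0]
        simp [Nat.card_coe_set_eq]

/-- Pointwise master bound for a word. -/
theorem urk_word_le (xs : List (PartialAut (n + 1))) :
    urk xs.prod ≤
      (AtermF urk false xs false + BtermF (fun a a' => urk (a * a')) true xs false) +
      (AtermF urk true xs true + BtermF (fun a a' => urk (a * a')) false xs true) := by
  rw [urk_split xs.prod]
  have h1 := cone_card_le xs false
  have h2 := cone_card_le xs true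
  simp only [Bool.not_false, Bool.not_true] at h1 h2
  omega

/-! ### Summation machinery -/

/-- Total ultimate rank of products of `k`-tuples. -/
noncomputable def Sk (n k : ℕ) : ℕ :=
  ∑ g : Fin k → PartialAut n, urk (List.ofFn g).prod

theorem ofFn_cons {X : Type*} {k : ℕ} (y : X) (g : Fin k → X) :
    List.ofFn (Fin.cons y g) = y :: List.ofFn g := by
  simp [List.ofFn_succ]

theorem sum_fin_succ {X : Type*} [Fintype X] {k : ℕ} (f : (Fin (k + 1) → X) → ℕ) :
    ∑ g : Fin (k + 1) → X, f g = ∑ y : X, ∑ g : Fin k → X, f (Fin.cons y g) := by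
  classical
  rw [← Equiv.sum_comp (Fin.consEquiv fun _ : Fin (k + 1) => X) f, Fintype.sum_prod_type]
  rfl

theorem sum_ite_const {P : Prop} [Decidable P] {X : Type*} [Fintype X] (f : X → ℕ) :
    (∑ x : X, if P then f x else 0) = if P then ∑ x : X, f x else 0 := by
  split <;> simp

theorem lvl1_other {x : PartialAut (n + 1)} {s c d : Bool} (h1 : lvl1 x s = some c)
    (h2 : lvl1 x (!s) = some d) : d = !c := by
  have hne : d ≠ c := by
    intro hdc
    subst hdc
    have := lvl1_inj h1 h2
    cases s <;> simp at this
  cases c <;> cases d <;> first | rfl | exact absurd rfl hne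

theorem bool_eq_or {b s : Bool} : b = s ∨ b = !s := by
  cases b <;> cases s <;> simp

/-- Summing a function of the subtree map over a level-one class. -/
theorem class_sum (s c : Bool) (G : PartialAut n → ℕ) :
    (∑ x : PartialAut (n + 1), if lvl1 x s = some c then G (subAt x s) else 0) ≤
      Fintype.card (Option (PartialAut n)) * ∑ y : PartialAut n, G y := by
  classical
  have hinj : ∀ x ∈ Finset.univ.filter (fun x : PartialAut (n + 1) => lvl1 x s = some c),
      ∀ x' ∈ Finset.univ.filter (fun x : PartialAut (n + 1) => lvl1 x s = some c),
      (fun x : PartialAut (n + 1) =>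
        ((subAt x s, (lvl1 x (!s)).map fun _ => subAt x (!s)) :
          PartialAut n × Option (PartialAut n))) x =
      (fun x : PartialAut (n + 1) =>
        ((subAt x s, (lvl1 x (!s)).map fun _ => subAt x (!s)) :
          PartialAut n × Option (PartialAut n))) x' → x = x' := by
    intro x hx x' hx' heq
    simp only [Finset.mem_filter, Finset.mem_univ, true_and] at hx hx'
    have heq1 : subAt x s = subAt x' s := congrArg Prod.fst heq
    have heq2 : (lvl1 x (!s)).map (fun _ => subAt x (!s)) =
        (lvl1 x' (!s)).map (fun _ => subAt x' (!s)) := congrArg Prod.snd heq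
    have hlv : lvl1 x (!s) = lvl1 x' (!s) ∧ subAt x (!s) = subAt x' (!s) := by
      cases h1 : lvl1 x (!s) with
      | none =>
        cases h2 : lvl1 x' (!s) with
        | none =>
          refine ⟨rfl, ?_⟩
          rw [subAt_of_none (lvl1_eq_none.1 h1), subAt_of_none (lvl1_eq_none.1 h2)]
        | some d' => rw [h1, h2] at heq2; cases heq2
      | some d =>
        cases h2 : lvl1 x' (!s) with
        | none => rw [h1, h2] at heq2; cases heq2
        | some d' =>
          rw [h1, h2] at heq2
          have hsub : subAt x (!s) = subAt x' (!s) := by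
            have := Option.some_inj.1 heq2
            exact this
          refine ⟨?_, hsub⟩
          rw [lvl1_other hx h1, lvl1_other hx' h2]
    apply ext_of
    · intro b
      rcases bool_eq_or (b := b) (s := s) with rfl | rfl
      · rw [hx, hx']
      · exact hlv.1
    · intro b
      rcases bool_eq_or (b := b) (s := s) with rfl | rfl
      · exact heq1
      · exact hlv.2
  calc (∑ x : PartialAut (n + 1), if lvl1 x s = some c then G (subAt x s) else 0)
      = ∑ x ∈ Finset.univ.filter (fun x : PartialAut (n + 1) => lvl1 x s = some c),
          G (subAt x s) := (Finset.sum_filter _ _).symm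
    _ = ∑ p ∈ (Finset.univ.filter
          (fun x : PartialAut (n + 1) => lvl1 x s = some c)).image
          (fun x : PartialAut (n + 1) =>
            ((subAt x s, (lvl1 x (!s)).map fun _ => subAt x (!s)) :
              PartialAut n × Option (PartialAut n))),
          G p.1 :=
          (Finset.sum_image (f := fun p : PartialAut n × Option (PartialAut n) => G p.1)
            hinj).symm
    _ ≤ ∑ p : PartialAut n × Option (PartialAut n), G p.1 :=
          Finset.sum_le_sum_of_subset (Finset.subset_univ _)
    _ = ∑ y : PartialAut n, ∑ _o : Option (PartialAut n), G y := Fintype.sum_prod_type _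
    _ = ∑ y : PartialAut n, Fintype.card (Option (PartialAut n)) * G y := by
          simp [Finset.sum_const, mul_comm]
    _ = Fintype.card (Option (PartialAut n)) * ∑ y : PartialAut n, G y := by
          rw [Finset.mul_sum]

/-- Summing a function of both subtree maps over a level-one permutation class. -/
theorem class_sum2 (s c : Bool) (G : PartialAut n → PartialAut n → ℕ) :
    (∑ x : PartialAut (n + 1),
      if lvl1 x s = some c ∧ lvl1 x (!s) = some (!c)
      then G (subAt x s) (subAt x (!s)) else 0) ≤
      ∑ y : PartialAut n, ∑ y' : PartialAut n, G y y' := by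
  classical
  have hinj : ∀ x ∈ Finset.univ.filter
      (fun x : PartialAut (n + 1) => lvl1 x s = some c ∧ lvl1 x (!s) = some (!c)),
      ∀ x' ∈ Finset.univ.filter
      (fun x : PartialAut (n + 1) => lvl1 x s = some c ∧ lvl1 x (!s) = some (!c)),
      (fun x : PartialAut (n + 1) => (subAt x s, subAt x (!s))) x =
      (fun x : PartialAut (n + 1) => (subAt x s, subAt x (!s))) x' → x = x' := by
    intro x hx x' hx' heq
    simp only [Finset.mem_filter, Finset.mem_univ, true_and] at hx hx'
    apply ext_of
    · intro b
      rcases bool_eq_or (b := b) (s := s) with rfl | rfl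
      · rw [hx.1, hx'.1]
      · rw [hx.2, hx'.2]
    · intro b
      rcases bool_eq_or (b := b) (s := s) with rfl | rfl
      · exact congrArg Prod.fst heq
      · exact congrArg Prod.snd heq
  calc (∑ x : PartialAut (n + 1),
        if lvl1 x s = some c ∧ lvl1 x (!s) = some (!c)
        then G (subAt x s) (subAt x (!s)) else 0)
      = ∑ x ∈ Finset.univ.filter
          (fun x : PartialAut (n + 1) => lvl1 x s = some c ∧ lvl1 x (!s) = some (!c)),
          G (subAt x s) (subAt x (!s)) := (Finset.sum_filter _ _).symm
    _ = ∑ p ∈ (Finset.univ.filter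
          (fun x : PartialAut (n + 1) => lvl1 x s = some c ∧ lvl1 x (!s) = some (!c))).image
          (fun x : PartialAut (n + 1) => (subAt x s, subAt x (!s))),
          G p.1 p.2 :=
          (Finset.sum_image (f := fun p : PartialAut n × PartialAut n => G p.1 p.2)
            hinj).symm
    _ ≤ ∑ p : PartialAut n × PartialAut n, G p.1 p.2 :=
          Finset.sum_le_sum_of_subset (Finset.subset_univ _)
    _ = ∑ y : PartialAut n, ∑ y' : PartialAut n, G y y' := Fintype.sum_prod_type _

/-- Number of level-one paths. -/
def paths : ℕ → Bool → Bool → ℕ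
  | 0, s, t => if s = t then 1 else 0
  | k + 1, _, t => paths k false t + paths k true t

theorem paths_eq : ∀ k, 1 ≤ k → ∀ s t, paths k s t = 2 ^ (k - 1) := by
  intro k
  induction k with
  | zero => omega
  | succ k ih =>
    intro _ s t
    cases Nat.eq_zero_or_pos k with
    | inl h0 =>
      subst h0
      cases t <;> simp [paths]
    | inr hpos =>
      show paths k false t + paths k true t = 2 ^ (k + 1 - 1)
      rw [ih hpos false t, ih hpos true t]
      have : k + 1 - 1 = (k - 1) + 1 := by omega
      rw [this, pow_succ]
      omega

set_option maxHeartbeats 1000000 in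
/-- The fundamental path-sum estimate for `A`-terms. -/
theorem pathsum : ∀ (k : ℕ) (s t : Bool) (F : PartialAut n → ℕ),
    (∑ g : Fin k → PartialAut (n + 1), AtermF F t (List.ofFn g) s) ≤
      paths k s t * Fintype.card (Option (PartialAut n)) ^ k *
        ∑ h : Fin k → PartialAut n, F (List.ofFn h).prod := by
  intro k
  induction k with
  | zero =>
    intro s t F
    rw [Fintype.sum_unique, Fintype.sum_unique]
    show AtermF F t (List.ofFn default) s ≤ paths 0 s t * _ ^ 0 * F (List.ofFn default).prod
    rw [List.ofFn_zero]
    by_cases hst : s = t <;> simp [AtermF, ret, paths, hst]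
  | succ k ih =>
    intro s t F
    classical
    have hA : ∀ (x : PartialAut (n + 1)) (xs : List (PartialAut (n + 1))),
        AtermF F t (x :: xs) s =
          ∑ c : Bool, if lvl1 x s = some c
            then AtermF (fun z => F (subAt x s * z)) t xs c else 0 := by
      intro x xs
      cases hc : lvl1 x s with
      | none =>
        have h0 : ret (x :: xs) s = none := by simp [ret, hc]
        simp [AtermF, h0, hc]
      | some c =>
        have h0 : ret (x :: xs) s = (ret xs c).map fun p : Bool × List (PartialAut n) =>
            (p.1, subAt x s :: p.2) := by simp [ret, hc]
        have hsum : (∑ c' : Bool, if some c = some c'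
            then AtermF (fun z => F (subAt x s * z)) t xs c' else 0)
            = AtermF (fun z => F (subAt x s * z)) t xs c := by
          simp
        rw [hsum]
        unfold AtermF
        rw [h0]
        cases hr : ret xs c with
        | none => rfl
        | some p => simp [List.prod_cons]
    have hstep : ∀ c : Bool,
        (∑ x : PartialAut (n + 1),
          if lvl1 x s = some c
          then ∑ g : Fin k → PartialAut (n + 1),
            AtermF (fun z => F (subAt x s * z)) t (List.ofFn g) c else 0) ≤
        paths k c t * Fintype.card (Option (PartialAut n)) ^ (k + 1) *
          ∑ h : Fin (k + 1) → PartialAut n, F (List.ofFn h).prod := by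
      intro c
      calc (∑ x : PartialAut (n + 1),
            if lvl1 x s = some c
            then ∑ g : Fin k → PartialAut (n + 1),
              AtermF (fun z => F (subAt x s * z)) t (List.ofFn g) c else 0)
          ≤ ∑ x : PartialAut (n + 1),
            (if lvl1 x s = some c
            then paths k c t * Fintype.card (Option (PartialAut n)) ^ k *
              ∑ h : Fin k → PartialAut n, F (subAt x s * (List.ofFn h).prod) else 0) := by
            refine Finset.sum_le_sum fun x _ => ?_
            split
            · exact ih c t (fun z => F (subAt x s * z))
            · exact le_rfl
        _ = paths k c t * Fintype.card (Option (PartialAut n)) ^ k *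
            ∑ x : PartialAut (n + 1),
              (if lvl1 x s = some c
              then ∑ h : Fin k → PartialAut n, F (subAt x s * (List.ofFn h).prod) else 0) := by
            rw [Finset.mul_sum]
            exact Finset.sum_congr rfl fun x _ => by split <;> simp
        _ ≤ paths k c t * Fintype.card (Option (PartialAut n)) ^ k *
            (Fintype.card (Option (PartialAut n)) *
              ∑ y : PartialAut n, ∑ h : Fin k → PartialAut n,
                F (y * (List.ofFn h).prod)) :=
            Nat.mul_le_mul_left _
              (class_sum s c (fun y => ∑ h : Fin k → PartialAut n, F (y * (List.ofFn h).prod)))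
        _ = paths k c t * Fintype.card (Option (PartialAut n)) ^ (k + 1) *
            ∑ y : PartialAut n, ∑ h : Fin k → PartialAut n, F (y * (List.ofFn h).prod) := by
            ring
        _ = paths k c t * Fintype.card (Option (PartialAut n)) ^ (k + 1) *
            ∑ h : Fin (k + 1) → PartialAut n, F (List.ofFn h).prod := by
            congr 1
            rw [sum_fin_succ (fun h : Fin (k + 1) → PartialAut n => F (List.ofFn h).prod)]
            exact Finset.sum_congr rfl fun y _ => Finset.sum_congr rfl fun g _ => by
              rw [ofFn_cons, List.prod_cons]
    calc (∑ g : Fin (k + 1) → PartialAut (n + 1), AtermF F t (List.ofFn g) s)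
        = ∑ x : PartialAut (n + 1), ∑ g : Fin k → PartialAut (n + 1),
            AtermF F t (x :: List.ofFn g) s := by
          rw [sum_fin_succ (fun g : Fin (k + 1) → PartialAut (n + 1) =>
            AtermF F t (List.ofFn g) s)]
          exact Finset.sum_congr rfl fun x _ => Finset.sum_congr rfl fun g _ => by
            rw [ofFn_cons]
      _ = ∑ x : PartialAut (n + 1), ∑ g : Fin k → PartialAut (n + 1), ∑ c : Bool,
            (if lvl1 x s = some c
            then AtermF (fun z => F (subAt x s * z)) t (List.ofFn g) c else 0) :=
          Finset.sum_congr rfl fun x _ => Finset.sum_congr rfl fun g _ => hA x (List.ofFn g)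
      _ = ∑ x : PartialAut (n + 1), ∑ c : Bool, ∑ g : Fin k → PartialAut (n + 1),
            (if lvl1 x s = some c
            then AtermF (fun z => F (subAt x s * z)) t (List.ofFn g) c else 0) :=
          Finset.sum_congr rfl fun x _ => Finset.sum_comm
      _ = ∑ c : Bool, ∑ x : PartialAut (n + 1), ∑ g : Fin k → PartialAut (n + 1),
            (if lvl1 x s = some c
            then AtermF (fun z => F (subAt x s * z)) t (List.ofFn g) c else 0) :=
          Finset.sum_comm
      _ = ∑ c : Bool, ∑ x : PartialAut (n + 1),
            (if lvl1 x s = some c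
            then ∑ g : Fin k → PartialAut (n + 1),
              AtermF (fun z => F (subAt x s * z)) t (List.ofFn g) c else 0) :=
          Finset.sum_congr rfl fun c _ => Finset.sum_congr rfl fun x _ => sum_ite_const _
      _ ≤ ∑ c : Bool, paths k c t * Fintype.card (Option (PartialAut n)) ^ (k + 1) *
            ∑ h : Fin (k + 1) → PartialAut n, F (List.ofFn h).prod :=
          Finset.sum_le_sum fun c _ => hstep c
      _ = paths (k + 1) s t * Fintype.card (Option (PartialAut n)) ^ (k + 1) *
            ∑ h : Fin (k + 1) → PartialAut n, F (List.ofFn h).prod := by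
          rw [Fintype.sum_bool]
          show _ = (paths k false t + paths k true t) * _ * _
          ring

set_option maxHeartbeats 1600000 in
/-- The fundamental path-sum estimate for `B`-terms. -/
theorem pathsum2 : ∀ (k : ℕ) (s t : Bool) (F : PartialAut n → PartialAut n → ℕ),
    (∑ g : Fin k → PartialAut (n + 1), BtermF F t (List.ofFn g) s) ≤
      paths k s t *
        ∑ hp : Fin k → PartialAut n × PartialAut n,
          F (List.ofFn fun i => (hp i).1).prod (List.ofFn fun i => (hp i).2).prod := by
  intro k
  induction k with
  | zero =>
    intro s t F
    rw [Fintype.sum_unique, Fintype.sum_unique]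
    show BtermF F t (List.ofFn default) s ≤ paths 0 s t * F _ _
    rw [List.ofFn_zero]
    by_cases hst : s = t <;> simp [BtermF, ret2, paths, hst]
  | succ k ih =>
    intro s t F
    classical
    have hB : ∀ (x : PartialAut (n + 1)) (xs : List (PartialAut (n + 1))),
        BtermF F t (x :: xs) s =
          ∑ c : Bool, if lvl1 x s = some c ∧ lvl1 x (!s) = some (!c)
            then BtermF (fun a a' => F (subAt x s * a) (subAt x (!s) * a')) t xs c else 0 := by
      intro x xs
      cases hc : lvl1 x s with
      | none =>
        have h0 : ret2 (x :: xs) s = none := by simp [ret2, hc]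
        simp [BtermF, h0, hc]
      | some c =>
        by_cases hc' : lvl1 x (!s) = some (!c)
        · have h0 : ret2 (x :: xs) s =
              (ret2 xs c).map fun p : Bool × List (PartialAut n) × List (PartialAut n) =>
                (p.1, subAt x s :: p.2.1, subAt x (!s) :: p.2.2) := by
            simp [ret2, hc, hc']
          have hsum : (∑ c' : Bool, if some c = some c' ∧ lvl1 x (!s) = some (!c')
              then BtermF (fun a a' => F (subAt x s * a) (subAt x (!s) * a')) t xs c' else 0)
              = BtermF (fun a a' => F (subAt x s * a) (subAt x (!s) * a')) t xs c := by
            have hiff : ∀ c' : Bool,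
                ((some c = some c' ∧ lvl1 x (!s) = some (!c')) ↔ c = c') := by
              intro c'; constructor
              · rintro ⟨h, -⟩; exact Option.some_inj.1 h
              · rintro rfl; exact ⟨rfl, hc'⟩
            simp only [hiff]
            simp
          rw [hsum]
          unfold BtermF
          rw [h0]
          cases hr : ret2 xs c with
          | none => rfl
          | some p => simp [List.prod_cons]
        · have h0 : ret2 (x :: xs) s = none := by simp [ret2, hc, hc']
          cases c
          · rw [Bool.not_false] at hc'
            simp [BtermF, h0, hc']
          · rw [Bool.not_true] at hc'
            simp [BtermF, h0, hc']
    have hstep : ∀ c : Bool,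
        (∑ x : PartialAut (n + 1),
          if lvl1 x s = some c ∧ lvl1 x (!s) = some (!c)
          then ∑ g : Fin k → PartialAut (n + 1),
            BtermF (fun a a' => F (subAt x s * a) (subAt x (!s) * a')) t (List.ofFn g) c
          else 0) ≤
        paths k c t *
          ∑ hp : Fin (k + 1) → PartialAut n × PartialAut n,
            F (List.ofFn fun i => (hp i).1).prod (List.ofFn fun i => (hp i).2).prod := by
      intro c
      calc (∑ x : PartialAut (n + 1),
            if lvl1 x s = some c ∧ lvl1 x (!s) = some (!c)
            then ∑ g : Fin k → PartialAut (n + 1),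
              BtermF (fun a a' => F (subAt x s * a) (subAt x (!s) * a')) t (List.ofFn g) c
            else 0)
          ≤ ∑ x : PartialAut (n + 1),
            (if lvl1 x s = some c ∧ lvl1 x (!s) = some (!c)
            then paths k c t *
              ∑ hp : Fin k → PartialAut n × PartialAut n,
                F (subAt x s * (List.ofFn fun i => (hp i).1).prod)
                  (subAt x (!s) * (List.ofFn fun i => (hp i).2).prod)
            else 0) := by
            refine Finset.sum_le_sum fun x _ => ?_
            split
            · exact ih c t (fun a a' => F (subAt x s * a) (subAt x (!s) * a'))
            · exact le_rfl
        _ = paths k c t * ∑ x : PartialAut (n + 1),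
              (if lvl1 x s = some c ∧ lvl1 x (!s) = some (!c)
              then ∑ hp : Fin k → PartialAut n × PartialAut n,
                F (subAt x s * (List.ofFn fun i => (hp i).1).prod)
                  (subAt x (!s) * (List.ofFn fun i => (hp i).2).prod)
              else 0) := by
            rw [Finset.mul_sum]
            exact Finset.sum_congr rfl fun x _ => by split <;> simp
        _ ≤ paths k c t * ∑ y : PartialAut n, ∑ y' : PartialAut n,
              ∑ hp : Fin k → PartialAut n × PartialAut n,
                F (y * (List.ofFn fun i => (hp i).1).prod)
                  (y' * (List.ofFn fun i => (hp i).2).prod) :=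
            Nat.mul_le_mul_left _ (class_sum2 s c
              (fun y y' => ∑ hp : Fin k → PartialAut n × PartialAut n,
                F (y * (List.ofFn fun i => (hp i).1).prod)
                  (y' * (List.ofFn fun i => (hp i).2).prod)))
        _ = paths k c t *
              ∑ hp : Fin (k + 1) → PartialAut n × PartialAut n,
                F (List.ofFn fun i => (hp i).1).prod (List.ofFn fun i => (hp i).2).prod := by
            congr 1
            rw [sum_fin_succ (fun hp : Fin (k + 1) → PartialAut n × PartialAut n =>
              F (List.ofFn fun i => (hp i).1).prod (List.ofFn fun i => (hp i).2).prod),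
              Fintype.sum_prod_type]
            refine Finset.sum_congr rfl fun y _ => Finset.sum_congr rfl fun y' _ =>
              Finset.sum_congr rfl fun hp _ => ?_
            have e1 : (fun i => ((Fin.cons (y, y') hp : Fin (k + 1) →
                PartialAut n × PartialAut n) i).1) = Fin.cons y (fun i => (hp i).1) := by
              funext i
              refine Fin.cases ?_ ?_ i <;> simp
            have e2 : (fun i => ((Fin.cons (y, y') hp : Fin (k + 1) →
                PartialAut n × PartialAut n) i).2) = Fin.cons y' (fun i => (hp i).2) := by
              funext i
              refine Fin.cases ?_ ?_ i <;> simp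
            rw [e1, e2, ofFn_cons, ofFn_cons, List.prod_cons, List.prod_cons]
    calc (∑ g : Fin (k + 1) → PartialAut (n + 1), BtermF F t (List.ofFn g) s)
        = ∑ x : PartialAut (n + 1), ∑ g : Fin k → PartialAut (n + 1),
            BtermF F t (x :: List.ofFn g) s := by
          rw [sum_fin_succ (fun g : Fin (k + 1) → PartialAut (n + 1) =>
            BtermF F t (List.ofFn g) s)]
          exact Finset.sum_congr rfl fun x _ => Finset.sum_congr rfl fun g _ => by
            rw [ofFn_cons]
      _ = ∑ x : PartialAut (n + 1), ∑ g : Fin k → PartialAut (n + 1), ∑ c : Bool,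
            (if lvl1 x s = some c ∧ lvl1 x (!s) = some (!c)
            then BtermF (fun a a' => F (subAt x s * a) (subAt x (!s) * a')) t
              (List.ofFn g) c else 0) :=
          Finset.sum_congr rfl fun x _ => Finset.sum_congr rfl fun g _ => hB x (List.ofFn g)
      _ = ∑ x : PartialAut (n + 1), ∑ c : Bool, ∑ g : Fin k → PartialAut (n + 1),
            (if lvl1 x s = some c ∧ lvl1 x (!s) = some (!c)
            then BtermF (fun a a' => F (subAt x s * a) (subAt x (!s) * a')) t
              (List.ofFn g) c else 0) :=
          Finset.sum_congr rfl fun x _ => Finset.sum_comm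
      _ = ∑ c : Bool, ∑ x : PartialAut (n + 1), ∑ g : Fin k → PartialAut (n + 1),
            (if lvl1 x s = some c ∧ lvl1 x (!s) = some (!c)
            then BtermF (fun a a' => F (subAt x s * a) (subAt x (!s) * a')) t
              (List.ofFn g) c else 0) :=
          Finset.sum_comm
      _ = ∑ c : Bool, ∑ x : PartialAut (n + 1),
            (if lvl1 x s = some c ∧ lvl1 x (!s) = some (!c)
            then ∑ g : Fin k → PartialAut (n + 1),
              BtermF (fun a a' => F (subAt x s * a) (subAt x (!s) * a')) t
                (List.ofFn g) c else 0) :=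
          Finset.sum_congr rfl fun c _ => Finset.sum_congr rfl fun x _ => sum_ite_const _
      _ ≤ ∑ c : Bool, paths k c t *
            ∑ hp : Fin (k + 1) → PartialAut n × PartialAut n,
              F (List.ofFn fun i => (hp i).1).prod (List.ofFn fun i => (hp i).2).prod :=
          Finset.sum_le_sum fun c _ => hstep c
      _ = paths (k + 1) s t *
            ∑ hp : Fin (k + 1) → PartialAut n × PartialAut n,
              F (List.ofFn fun i => (hp i).1).prod (List.ofFn fun i => (hp i).2).prod := by
          rw [Fintype.sum_bool]
          show _ = (paths k false t + paths k true t) * _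
          ring

/-- Converting the pair-sum into `Sk n (k+k)`. -/
theorem sum_pairs_eq (k : ℕ) :
    (∑ hp : Fin k → PartialAut n × PartialAut n,
      urk ((List.ofFn fun i => (hp i).1).prod * (List.ofFn fun i => (hp i).2).prod))
      = Sk n (k + k) := by
  classical
  have e1 : (∑ hp : Fin k → PartialAut n × PartialAut n,
      urk ((List.ofFn fun i => (hp i).1).prod * (List.ofFn fun i => (hp i).2).prod))
      = ∑ p : (Fin k → PartialAut n) × (Fin k → PartialAut n),
          urk ((List.ofFn p.1).prod * (List.ofFn p.2).prod) := by
    apply Fintype.sum_bijective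
      (fun hp : Fin k → PartialAut n × PartialAut n =>
        (((fun i => (hp i).1), (fun i => (hp i).2)) :
          (Fin k → PartialAut n) × (Fin k → PartialAut n)))
      (Equiv.arrowProdEquivProdArrow (Fin k) (fun _ => PartialAut n) (fun _ => PartialAut n)).bijective
    intro hp
    rfl
  rw [e1, Sk]
  have hbij : Function.Bijective
      (fun p : (Fin k → PartialAut n) × (Fin k → PartialAut n) => Fin.append p.1 p.2) := by
    constructor
    · intro p q h
      have h1 : p.1 = q.1 := by
        funext i
        have := congrFun h (Fin.castAdd k i)
        simp only [Fin.append_left] at this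
        exact this
      have h2 : p.2 = q.2 := by
        funext i
        have := congrFun h (Fin.natAdd k i)
        simp only [Fin.append_right] at this
        exact this
      exact Prod.ext h1 h2
    · intro h
      refine ⟨((fun i => h (Fin.castAdd k i)), (fun i => h (Fin.natAdd k i))), ?_⟩
      funext i
      refine Fin.addCases (fun j => ?_) (fun j => ?_) i
      · simp only [Fin.append_left]
      · simp only [Fin.append_right]
  exact Fintype.sum_bijective _ hbij _ _ fun p => by
    rw [List.ofFn_fin_append, List.prod_append]

/-- The master recursion. -/
theorem master (k : ℕ) (hk : 1 ≤ k) :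
    Sk (n + 1) k ≤ 2 ^ k * Fintype.card (Option (PartialAut n)) ^ k * Sk n k
      + 2 ^ k * Sk n (k + k) := by
  classical
  have hpt : Sk (n + 1) k ≤
      ((∑ g : Fin k → PartialAut (n + 1), AtermF urk false (List.ofFn g) false)
        + (∑ g : Fin k → PartialAut (n + 1), AtermF urk true (List.ofFn g) true))
      + ((∑ g : Fin k → PartialAut (n + 1),
            BtermF (fun a a' => urk (a * a')) true (List.ofFn g) false)
        + (∑ g : Fin k → PartialAut (n + 1),
            BtermF (fun a a' => urk (a * a')) false (List.ofFn g) true)) := by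
    rw [Sk, ← Finset.sum_add_distrib, ← Finset.sum_add_distrib, ← Finset.sum_add_distrib]
    refine Finset.sum_le_sum fun g _ => ?_
    have h := urk_word_le (List.ofFn g)
    omega
  have hA1 := pathsum (n := n) k false false urk
  have hA2 := pathsum (n := n) k true true urk
  have hB1 := pathsum2 (n := n) k false true (fun a a' => urk (a * a'))
  have hB2 := pathsum2 (n := n) k true false (fun a a' => urk (a * a'))
  rw [paths_eq k hk, sum_pairs_eq] at hB1 hB2
  rw [paths_eq k hk] at hA1 hA2
  have hSk : (∑ h : Fin k → PartialAut n, urk (List.ofFn h).prod) = Sk n k := rfl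
  rw [hSk] at hA1 hA2
  have hpow : 2 ^ (k - 1) + 2 ^ (k - 1) = 2 ^ k := by
    have h1 : 2 ^ k = 2 ^ (k - 1) * 2 := by
      rw [← pow_succ]
      congr 1
      omega
    omega
  calc Sk (n + 1) k ≤ _ := hpt
    _ ≤ (2 ^ (k - 1) * Fintype.card (Option (PartialAut n)) ^ k * Sk n k
          + 2 ^ (k - 1) * Fintype.card (Option (PartialAut n)) ^ k * Sk n k)
        + (2 ^ (k - 1) * Sk n (k + k) + 2 ^ (k - 1) * Sk n (k + k)) := by
        exact Nat.add_le_add (Nat.add_le_add hA1 hA2) (Nat.add_le_add hB1 hB2)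
    _ = (2 ^ (k - 1) + 2 ^ (k - 1)) * Fintype.card (Option (PartialAut n)) ^ k * Sk n k
        + (2 ^ (k - 1) + 2 ^ (k - 1)) * Sk n (k + k) := by ring
    _ = 2 ^ k * Fintype.card (Option (PartialAut n)) ^ k * Sk n k
        + 2 ^ k * Sk n (k + k) := by rw [hpow]

/-! ### Counting -/

instance : Nonempty (PartialAut n) := ⟨1⟩

theorem Nn_pos (n : ℕ) : 1 ≤ Nn n := Nat.card_pos

theorem cardQ (n : ℕ) : Fintype.card (Option (PartialAut n)) = Nn n + 1 := by
  rw [Fintype.card_option, Nn, Nat.card_eq_fintype_card]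

/-- The classifying data for a partial automorphism of `T_{n+1}`. -/
abbrev Idx (n : ℕ) : Type :=
  ((Bool × PartialAut n × PartialAut n) ⊕ (Bool × Bool × PartialAut n)) ⊕ Unit

theorem card_Idx (n : ℕ) : Nat.card (Idx n) = 2 * Nn n ^ 2 + 4 * Nn n + 1 := by
  have : Nat.card (Idx n) = Fintype.card (Idx n) := Nat.card_eq_fintype_card
  rw [this]
  show Fintype.card (((Bool × PartialAut n × PartialAut n) ⊕ (Bool × Bool × PartialAut n)) ⊕ Unit) = _
  rw [Fintype.card_sum, Fintype.card_sum, Fintype.card_prod, Fintype.card_prod,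
    Fintype.card_prod, Fintype.card_prod, Fintype.card_bool, Fintype.card_unit]
  have hN : Fintype.card (PartialAut n) = Nn n := (Nat.card_eq_fintype_card).symm
  rw [hN]
  ring

/-- Assembling an element from the classifying data. -/
noncomputable def Jmap (i : Idx n) : PartialAut (n + 1) :=
  match i with
  | Sum.inl (Sum.inl (b, y, y')) =>
      glue (fun s => some (xor s b))
        (fun s s' c h1 h2 => by
          have e1 : some (xor s b) = some c := h1
          have e2 : some (xor s' b) = some c := h2
          cases s <;> cases s' <;> cases b <;> simp_all)
        (fun s => if s then y' else y)
  | Sum.inl (Sum.inr (s0, c, y)) =>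
      glue (fun s => if s = s0 then some c else none)
        (fun s s' c' h1 h2 => by
          have e1 : (if s = s0 then some c else none) = some c' := h1
          have e2 : (if s' = s0 then some c else none) = some c' := h2
          by_cases hs : s = s0
          · by_cases hs' : s' = s0
            · rw [hs, hs']
            · rw [if_neg hs'] at e2; cases e2
          · rw [if_neg hs] at e1; cases e1)
        (fun _ => y)
  | Sum.inr _ =>
      glue (fun _ => none) (fun s s' c h1 _ => by cases h1) (fun _ => 1)

theorem Jmap_injective : Function.Injective (Jmap (n := n)) := by
  intro i i' h
  match i, i' with
  | Sum.inl (Sum.inl (b, y, y')), Sum.inl (Sum.inl (b', y₂, y₂')) =>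
    have g1 : lvl1 (Jmap (Sum.inl (Sum.inl (b, y, y')))) false = some (xor false b) :=
      by unfold Jmap; exact lvl1_glue _ _ _ _
    have g2 : lvl1 (Jmap (Sum.inl (Sum.inl (b', y₂, y₂')))) false = some (xor false b') :=
      by unfold Jmap; exact lvl1_glue _ _ _ _
    rw [h, g2] at g1
    have hb : b = b' := by cases b <;> cases b' <;> simp_all
    subst hb
    have f1 : subAt (Jmap (Sum.inl (Sum.inl (b, y, y')))) false = y := by unfold Jmap; exact subAt_glue _ _ _ rfl
    have f2 : subAt (Jmap (Sum.inl (Sum.inl (b, y₂, y₂')))) false = y₂ := by unfold Jmap; exact subAt_glue _ _ _ rfl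
    have f3 : subAt (Jmap (Sum.inl (Sum.inl (b, y, y')))) true = y' := by unfold Jmap; exact subAt_glue _ _ _ rfl
    have f4 : subAt (Jmap (Sum.inl (Sum.inl (b, y₂, y₂')))) true = y₂' := by unfold Jmap; exact subAt_glue _ _ _ rfl
    have hy : y = y₂ := by rw [← f1, ← f2, h]
    have hy' : y' = y₂' := by rw [← f3, ← f4, h]
    rw [hy, hy']
  | Sum.inl (Sum.inl (b, y, y')), Sum.inl (Sum.inr (s0, c, y₂)) =>
    have g1 : lvl1 (Jmap (Sum.inl (Sum.inl (b, y, y')))) (!s0) = some (xor (!s0) b) :=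
      by unfold Jmap; exact lvl1_glue _ _ _ _
    have g2 : lvl1 (Jmap (Sum.inl (Sum.inr (s0, c, y₂)))) (!s0) =
        (if (!s0) = s0 then some c else none) := by unfold Jmap; exact lvl1_glue _ _ _ _
    rw [if_neg (by cases s0 <;> simp)] at g2
    rw [h, g2] at g1
    cases g1
  | Sum.inl (Sum.inl (b, y, y')), Sum.inr u =>
    have g1 : lvl1 (Jmap (Sum.inl (Sum.inl (b, y, y')))) false = some (xor false b) :=
      by unfold Jmap; exact lvl1_glue _ _ _ _
    have g2 : lvl1 (Jmap (Sum.inr u : Idx n)) false = none := by unfold Jmap; exact lvl1_glue _ _ _ _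
    rw [h, g2] at g1
    cases g1
  | Sum.inl (Sum.inr (s0, c, y)), Sum.inl (Sum.inl (b, y₂, y₂')) =>
    have g1 : lvl1 (Jmap (Sum.inl (Sum.inr (s0, c, y)))) (!s0) =
        (if (!s0) = s0 then some c else none) := by unfold Jmap; exact lvl1_glue _ _ _ _
    have g2 : lvl1 (Jmap (Sum.inl (Sum.inl (b, y₂, y₂')))) (!s0) = some (xor (!s0) b) :=
      by unfold Jmap; exact lvl1_glue _ _ _ _
    rw [if_neg (by cases s0 <;> simp)] at g1
    rw [h, g2] at g1
    cases g1
  | Sum.inl (Sum.inr (s0, c, y)), Sum.inl (Sum.inr (s1, c', y₂)) =>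
    have g1 : lvl1 (Jmap (Sum.inl (Sum.inr (s0, c, y)))) s0 =
        (if s0 = s0 then some c else none) := by unfold Jmap; exact lvl1_glue _ _ _ _
    have g2 : lvl1 (Jmap (Sum.inl (Sum.inr (s1, c', y₂)))) s0 =
        (if s0 = s1 then some c' else none) := by unfold Jmap; exact lvl1_glue _ _ _ _
    rw [if_pos rfl] at g1
    rw [h, g2] at g1
    by_cases hs : s0 = s1
    · subst hs
      rw [if_pos rfl] at g1
      have hc : c' = c := Option.some_inj.1 g1
      subst hc
      have f1 : subAt (Jmap (Sum.inl (Sum.inr (s0, c', y)))) s0 = y :=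
        by unfold Jmap; exact subAt_glue _ _ _ (if_pos rfl)
      have f2 : subAt (Jmap (Sum.inl (Sum.inr (s0, c', y₂)))) s0 = y₂ :=
        by unfold Jmap; exact subAt_glue _ _ _ (if_pos rfl)
      have hy : y = y₂ := by rw [← f1, ← f2, h]
      rw [hy]
    · rw [if_neg hs] at g1
      cases g1
  | Sum.inl (Sum.inr (s0, c, y)), Sum.inr u =>
    have g1 : lvl1 (Jmap (Sum.inl (Sum.inr (s0, c, y)))) s0 =
        (if s0 = s0 then some c else none) := by unfold Jmap; exact lvl1_glue _ _ _ _
    have g2 : lvl1 (Jmap (Sum.inr u : Idx n)) s0 = none := by unfold Jmap; exact lvl1_glue _ _ _ _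
    rw [if_pos rfl] at g1
    rw [h, g2] at g1
    cases g1
  | Sum.inr u, Sum.inl (Sum.inl (b, y, y')) =>
    have g1 : lvl1 (Jmap (Sum.inr u : Idx n)) false = none := by unfold Jmap; exact lvl1_glue _ _ _ _
    have g2 : lvl1 (Jmap (Sum.inl (Sum.inl (b, y, y')))) false = some (xor false b) :=
      by unfold Jmap; exact lvl1_glue _ _ _ _
    rw [h, g2] at g1
    cases g1
  | Sum.inr u, Sum.inl (Sum.inr (s0, c, y)) =>
    have g1 : lvl1 (Jmap (Sum.inr u : Idx n)) s0 = none := by unfold Jmap; exact lvl1_glue _ _ _ _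
    have g2 : lvl1 (Jmap (Sum.inl (Sum.inr (s0, c, y)))) s0 =
        (if s0 = s0 then some c else none) := by unfold Jmap; exact lvl1_glue _ _ _ _
    rw [if_pos rfl] at g2
    rw [h, g2] at g1
    cases g1
  | Sum.inr u, Sum.inr u' =>
    cases u
    cases u'
    rfl

/-- Extracting the classifying data. -/
noncomputable def Kmap (x : PartialAut (n + 1)) : Idx n :=
  match lvl1 x false, lvl1 x true with
  | some c, some _ => Sum.inl (Sum.inl (c, subAt x false, subAt x true))
  | some c, none => Sum.inl (Sum.inr (false, c, subAt x false))
  | none, some c => Sum.inl (Sum.inr (true, c, subAt x true))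
  | none, none => Sum.inr ()

theorem Kmap_injective : Function.Injective (Kmap (n := n)) := by
  intro x x' h
  have exth : (lvl1 x false = lvl1 x' false) → (lvl1 x true = lvl1 x' true) →
      (subAt x false = subAt x' false) → (subAt x true = subAt x' true) → x = x' :=
    fun e1 e2 e3 e4 => ext_of (fun b => by cases b <;> assumption)
      (fun b => by cases b <;> assumption)
  unfold Kmap at h
  cases hxf : lvl1 x false <;> cases hxt : lvl1 x true <;>
    cases hx'f : lvl1 x' false <;> cases hx't : lvl1 x' true <;>
    rw [hxf, hxt, hx'f, hx't] at h <;>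
    simp only [Sum.inl.injEq, Sum.inr.injEq, Prod.mk.injEq, reduceCtorEq, and_false,
      false_and, Bool.true_eq_false, Bool.false_eq_true, true_and, and_true] at h
  · -- all none
    apply exth (by rw [hxf, hx'f]) (by rw [hxt, hx't])
    · rw [subAt_of_none (lvl1_eq_none.1 hxf), subAt_of_none (lvl1_eq_none.1 hx'f)]
    · rw [subAt_of_none (lvl1_eq_none.1 hxt), subAt_of_none (lvl1_eq_none.1 hx't)]
  · -- (none, some) vs (none, some)
    apply exth (by rw [hxf, hx'f]) (by rw [hxt, hx't, h.1])
    · rw [subAt_of_none (lvl1_eq_none.1 hxf), subAt_of_none (lvl1_eq_none.1 hx'f)]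
    · exact h.2
  · -- (some, none) vs (some, none)
    apply exth (by rw [hxf, hx'f, h.1]) (by rw [hxt, hx't])
    · exact h.2
    · rw [subAt_of_none (lvl1_eq_none.1 hxt), subAt_of_none (lvl1_eq_none.1 hx't)]
  · -- (some, some) vs (some, some)
    rename_i c d c' d'
    have hd : d = !c := lvl1_other (s := false) hxf hxt
    have hd' : d' = !c' := lvl1_other (s := false) hx'f hx't
    apply exth (by rw [hxf, hx'f, h.1]) (by rw [hxt, hx't, hd, hd', h.1])
    · exact h.2.1
    · exact h.2.2

theorem Nn_succ (n : ℕ) : Nn (n + 1) = 2 * Nn n ^ 2 + 4 * Nn n + 1 := by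
  have h1 : Nn (n + 1) ≤ 2 * Nn n ^ 2 + 4 * Nn n + 1 := by
    rw [← card_Idx]
    exact Nat.card_le_card_of_injective _ Kmap_injective
  have h2 : 2 * Nn n ^ 2 + 4 * Nn n + 1 ≤ Nn (n + 1) := by
    rw [← card_Idx]
    exact Nat.card_le_card_of_injective _ Jmap_injective
  omega

/-! ### Base level facts -/

instance : Subsingleton (PartialAut 0) :=
  ⟨fun x y => by
    apply PartialAut.ext'
    funext l
    match l with
    | [] => rw [x.root_map, y.root_map]
    | b :: t =>
      rw [PartialAut.toFun_eq_none (x := x) (by simp), PartialAut.toFun_eq_none (x := y) (by simp)]⟩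

theorem urk_one_zero : urk (1 : PartialAut 0) = 1 := by
  have hset : survSet (1 : PartialAut 0) = {([] : List Bool)} := by
    ext l
    simp only [survSet, Set.mem_setOf_eq, PartialAut.dom, ne_eq, Set.mem_singleton_iff,
      List.length_eq_zero_iff]
    constructor
    · rintro ⟨h, -⟩; exact h
    · rintro rfl
      refine ⟨rfl, fun m hm => ?_⟩
      rw [one_pow]
      simp
  show Nat.card (survSet (1 : PartialAut 0)) = 1
  rw [Nat.card_coe_set_eq, hset, Set.ncard_singleton]

theorem Sk_zero_level (m : ℕ) : Sk 0 m = 1 := by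
  rw [Sk]
  rw [Fintype.sum_subsingleton _ (fun _ : Fin m => (1 : PartialAut 0))]
  have hprod : (List.ofFn fun _ : Fin m => (1 : PartialAut 0)).prod = 1 := by
    apply List.prod_eq_one
    intro x hx
    rw [List.mem_ofFn] at hx
    obtain ⟨i, hi⟩ := hx
    exact hi.symm
  rw [hprod, urk_one_zero]

theorem Nn_zero : Nn 0 = 1 := by
  rw [Nn, Nat.card_eq_fintype_card]
  have h1 : 0 < Fintype.card (PartialAut 0) := Fintype.card_pos
  have h2 : Fintype.card (PartialAut 0) ≤ 1 := Fintype.card_le_one_iff_subsingleton.2 inferInstance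
  omega

/-! ### The numeric induction -/

theorem master' (n k : ℕ) (hk : 1 ≤ k) :
    Sk (n + 1) k ≤ 2 ^ k * (Nn n + 1) ^ k * Sk n k + 2 ^ k * Sk n (k + k) := by
  have h := master (n := n) k hk
  rwa [cardQ] at h

theorem Sk_one (n : ℕ) : Sk n 1 = Rn n := by
  rw [Sk, Rn, ← Equiv.sum_comp (Equiv.funUnique (Fin 1) (PartialAut n)).symm
    (fun g : Fin 1 → PartialAut n => urk (List.ofFn g).prod)]
  refine Finset.sum_congr rfl fun x _ => ?_
  have h : List.ofFn ((Equiv.funUnique (Fin 1) (PartialAut n)).symm x) = [x] := by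
    simp [List.ofFn_succ]
  rw [h, List.prod_singleton]

theorem nat_key_a : ∀ k, 2 ≤ k → 2 * 16 ^ k ≤ 28 ^ k := by
  intro k
  induction k with
  | zero => omega
  | succ k ih =>
    intro hk
    cases Nat.lt_or_ge k 2 with
    | inl h2 =>
      interval_cases k
      · omega
      · norm_num
    | inr h2 =>
      have := ih h2
      rw [pow_succ, pow_succ]
      calc 2 * (16 ^ k * 16) = (2 * 16 ^ k) * 16 := by ring
        _ ≤ 28 ^ k * 16 := Nat.mul_le_mul_right _ this
        _ ≤ 28 ^ k * 28 := Nat.mul_le_mul_left _ (by norm_num)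

theorem nat_key_b : ∀ k, 2 ≤ k → 2 * 4 ^ k ≤ 14 ^ k := by
  intro k
  induction k with
  | zero => omega
  | succ k ih =>
    intro hk
    cases Nat.lt_or_ge k 2 with
    | inl h2 =>
      interval_cases k
      · omega
      · norm_num
    | inr h2 =>
      have := ih h2
      rw [pow_succ, pow_succ]
      calc 2 * (4 ^ k * 4) = (2 * 4 ^ k) * 4 := by ring
        _ ≤ 14 ^ k * 4 := Nat.mul_le_mul_right _ this
        _ ≤ 14 ^ k * 14 := Nat.mul_le_mul_left _ (by norm_num)

theorem nat_key (k : ℕ) (hk : 1 ≤ k) : 2 * (16 ^ k + 4 ^ k) ≤ 28 ^ k + 14 ^ k := by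
  cases Nat.lt_or_ge k 2 with
  | inl h2 =>
    interval_cases k
    · norm_num
  | inr h2 =>
    have ha := nat_key_a k h2
    have hb := nat_key_b k h2
    omega

theorem v_doubling (k : ℕ) (hk : 1 ≤ k) :
    ((4:ℝ) ^ (k + k) + 2 ^ (k + k)) / (2 * 7 ^ (k + k)) ≤
      ((4:ℝ) ^ k + 2 ^ k) / (2 * 7 ^ k) / 2 := by
  rw [div_div, div_le_div_iff₀ (by positivity) (by positivity)]
  have h16 : (4:ℝ) ^ (k + k) = 16 ^ k := by rw [pow_add, ← mul_pow]; norm_num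
  have h4 : (2:ℝ) ^ (k + k) = 4 ^ k := by rw [pow_add, ← mul_pow]; norm_num
  have h49 : (7:ℝ) ^ (k + k) = 49 ^ k := by rw [pow_add, ← mul_pow]; norm_num
  rw [h16, h4, h49]
  have hnat := nat_key k hk
  have hr : 2 * ((16:ℝ) ^ k + 4 ^ k) ≤ 28 ^ k + 14 ^ k := by exact_mod_cast hnat
  have h28 : (28:ℝ) ^ k = 4 ^ k * 7 ^ k := by rw [← mul_pow]; norm_num
  have h14 : (14:ℝ) ^ k = 2 ^ k * 7 ^ k := by rw [← mul_pow]; norm_num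
  have h49' : (49:ℝ) ^ k = 7 ^ k * 7 ^ k := by rw [← mul_pow]; norm_num
  rw [h28, h14] at hr
  rw [h49']
  have h7pos : (0:ℝ) < 7 ^ k := by positivity
  nlinarith [mul_le_mul_of_nonneg_right hr (le_of_lt h7pos)]

theorem key_bound : ∀ n, 1 ≤ n → ∀ k, 1 ≤ k →
    (Sk n k : ℝ) ≤ (3/4) ^ (n - 1) * 2 ^ n *
      (((4:ℝ) ^ k + 2 ^ k) / (2 * 7 ^ k)) * (Nn n : ℝ) ^ k := by
  intro n
  induction n with
  | zero => omega
  | succ n ih =>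
    intro _ k hk
    cases Nat.eq_zero_or_pos n with
    | inl h0 =>
      subst h0
      have hm := master' 0 k hk
      rw [Sk_zero_level, Sk_zero_level, Nn_zero] at hm
      have h1 : 2 ^ k * (1 + 1) ^ k * 1 + 2 ^ k * 1 = 4 ^ k + 2 ^ k := by
        have h2 : (4:ℕ) ^ k = 2 ^ k * 2 ^ k := by
          rw [show (4:ℕ) = 2 * 2 from rfl, mul_pow]
        have h3 : ((1:ℕ) + 1) = 2 := rfl
        rw [h3, mul_one, mul_one, h2]
      have hm2 : Sk (0 + 1) k ≤ 4 ^ k + 2 ^ k := by omega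
      have hN1 : Nn (0 + 1) = 7 := by
        rw [Nn_succ 0, Nn_zero]
        norm_num
      calc (Sk (0 + 1) k : ℝ) ≤ 4 ^ k + 2 ^ k := by exact_mod_cast hm2
        _ = (3/4) ^ (0 + 1 - 1) * 2 ^ (0 + 1) *
              (((4:ℝ) ^ k + 2 ^ k) / (2 * 7 ^ k)) * (Nn (0 + 1) : ℝ) ^ k := by
            rw [hN1]
            have h7 : ((7:ℕ) : ℝ) = 7 := by norm_cast
            rw [h7]
            have h7k : (7:ℝ) ^ k ≠ 0 := by positivity
            field_simp
            ring
    | inr hpos =>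
      have hm := master' n k hk
      have c1 := ih hpos k hk
      have c2 := ih hpos (k + k) (by omega)
      set N : ℝ := (Nn n : ℝ) with hN
      have hN0 : (0:ℝ) ≤ N := by positivity
      have hN1 : (1:ℝ) ≤ N := by
        have := Nn_pos n
        rw [hN]
        exact_mod_cast this
      set M : ℝ := (Nn (n + 1) : ℝ) with hM
      have hMge : (2 * N ^ 2 + 4 * N + 1 : ℝ) = M := by
        rw [hM, hN, Nn_succ]
        push_cast
        ring
      have hM0 : (0:ℝ) ≤ M := by rw [← hMge]; positivity
      set vk : ℝ := ((4:ℝ) ^ k + 2 ^ k) / (2 * 7 ^ k) with hvk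
      set vkk : ℝ := ((4:ℝ) ^ (k + k) + 2 ^ (k + k)) / (2 * 7 ^ (k + k)) with hvkk
      have hvk0 : (0:ℝ) ≤ vk := by rw [hvk]; positivity
      have hvd : vkk ≤ vk / 2 := v_doubling k hk
      set T : ℝ := (3/4) ^ (n - 1) * 2 ^ n with hT
      have hT0 : (0:ℝ) ≤ T := by rw [hT]; positivity
      have step1 : (Sk (n + 1) k : ℝ) ≤
          2 ^ k * (N + 1) ^ k * (Sk n k : ℝ) + 2 ^ k * (Sk n (k + k) : ℝ) := by
        have : ((2 ^ k * (Nn n + 1) ^ k * Sk n k + 2 ^ k * Sk n (k + k) : ℕ) : ℝ)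
            = 2 ^ k * (N + 1) ^ k * (Sk n k : ℝ) + 2 ^ k * (Sk n (k + k) : ℝ) := by
          push_cast
          ring
        rw [← this]
        exact_mod_cast hm
      have step2 : (Sk (n + 1) k : ℝ) ≤
          2 ^ k * (N + 1) ^ k * (T * vk * N ^ k) + 2 ^ k * (T * vkk * N ^ (k + k)) := by
        refine le_trans step1 (add_le_add ?_ ?_)
        · exact mul_le_mul_of_nonneg_left c1 (by positivity)
        · exact mul_le_mul_of_nonneg_left c2 (by positivity)
      have step3 : 2 ^ k * (N + 1) ^ k * (T * vk * N ^ k) + 2 ^ k * (T * vkk * N ^ (k + k))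
          = T * ((2 ^ k * (N + 1) ^ k * N ^ k) * vk + (2 ^ k * N ^ k * N ^ k) * vkk) := by
        rw [pow_add]
        ring
      have hb1 : 2 ^ k * (N + 1) ^ k * N ^ k ≤ M ^ k := by
        have h' : (2 * ((N + 1) * N)) ^ k ≤ M ^ k := by
          apply pow_le_pow_left₀ (by positivity)
          nlinarith
        calc 2 ^ k * (N + 1) ^ k * N ^ k = (2 * ((N + 1) * N)) ^ k := by
              rw [mul_pow, mul_pow, mul_assoc]
          _ ≤ M ^ k := h'
      have hb2 : 2 ^ k * N ^ k * N ^ k ≤ M ^ k := by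
        have h' : (2 * (N * N)) ^ k ≤ M ^ k := by
          apply pow_le_pow_left₀ (by positivity)
          nlinarith
        calc 2 ^ k * N ^ k * N ^ k = (2 * (N * N)) ^ k := by
              rw [mul_pow, mul_pow, mul_assoc]
          _ ≤ M ^ k := h'
      have step4 : (2 ^ k * (N + 1) ^ k * N ^ k) * vk + (2 ^ k * N ^ k * N ^ k) * vkk
          ≤ M ^ k * vk + M ^ k * (vk / 2) := by
        refine add_le_add (mul_le_mul_of_nonneg_right hb1 hvk0) ?_
        calc (2 ^ k * N ^ k * N ^ k) * vkk ≤ (2 ^ k * N ^ k * N ^ k) * (vk / 2) := by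
              apply mul_le_mul_of_nonneg_left hvd (by positivity)
          _ ≤ M ^ k * (vk / 2) := by
              apply mul_le_mul_of_nonneg_right hb2 (by positivity)
      have hfin : T * (M ^ k * vk + M ^ k * (vk / 2))
          = (3/4) ^ (n + 1 - 1) * 2 ^ (n + 1) * vk * M ^ k := by
        have hn1 : n + 1 - 1 = n := by omega
        have hn2 : n = (n - 1) + 1 := by omega
        rw [hn1, hT]
        rw [hn2, pow_succ, pow_succ]
        have hn3 : n - 1 + 1 - 1 = n - 1 := by omega
        rw [hn3]
        ring
      calc (Sk (n + 1) k : ℝ)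
          ≤ T * ((2 ^ k * (N + 1) ^ k * N ^ k) * vk + (2 ^ k * N ^ k * N ^ k) * vkk) := by
            rw [← step3]; exact step2
        _ ≤ T * (M ^ k * vk + M ^ k * (vk / 2)) := mul_le_mul_of_nonneg_left step4 hT0
        _ = (3/4) ^ (n + 1 - 1) * 2 ^ (n + 1) * vk * M ^ k := hfin

theorem pn_le (n : ℕ) (hn : 1 ≤ n) : pn n ≤ (3/4 : ℝ) ^ (n - 1) * (3/7) := by
  have h := key_bound n hn 1 le_rfl
  rw [Sk_one] at h
  have hv : ((4:ℝ) ^ 1 + 2 ^ 1) / (2 * 7 ^ 1) = 3/7 := by norm_num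
  rw [hv, pow_one] at h
  rw [pn]
  have hNpos : (0:ℝ) < (Nn n : ℝ) := by exact_mod_cast Nn_pos n
  have hpos : (0:ℝ) < 2 ^ n * (Nn n : ℝ) := by positivity
  rw [div_le_iff₀ hpos]
  calc (Rn n : ℝ) ≤ (3/4) ^ (n - 1) * 2 ^ n * (3/7) * (Nn n : ℝ) := h
    _ = (3/4) ^ (n - 1) * (3/7) * (2 ^ n * (Nn n : ℝ)) := by ring

/-! ### Explicit elements of `P_1` -/

def aId : PartialAut (0 + 1) :=
  glue (fun s => some s)
    (fun _ _ _ h1 h2 => (Option.some_inj.1 h1).trans (Option.some_inj.1 h2).symm)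
    (fun _ => 1)

def aSw : PartialAut (0 + 1) :=
  glue (fun s => some (!s))
    (fun b b' c h1 h2 => by
      have e1 : some (!b) = some c := h1
      have e2 : some (!b') = some c := h2
      cases b <;> cases b' <;> simp_all)
    (fun _ => 1)

def aF : PartialAut (0 + 1) :=
  glue (fun s => if s = false then some false else none)
    (fun b b' c h1 h2 => by
      have e1 : (if b = false then some false else none) = some c := h1
      have e2 : (if b' = false then some false else none) = some c := h2
      by_cases hb : b = false
      · by_cases hb' : b' = false
        · rw [hb, hb']
        · rw [if_neg hb'] at e2; cases e2
      · rw [if_neg hb] at e1; cases e1)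
    (fun _ => 1)

def aT : PartialAut (0 + 1) :=
  glue (fun s => if s = true then some true else none)
    (fun b b' c h1 h2 => by
      have e1 : (if b = true then some true else none) = some c := h1
      have e2 : (if b' = true then some true else none) = some c := h2
      by_cases hb : b = true
      · by_cases hb' : b' = true
        · rw [hb, hb']
        · rw [if_neg hb'] at e2; cases e2
      · rw [if_neg hb] at e1; cases e1)
    (fun _ => 1)

theorem haId : ∀ b, lvl1 aId b = some b := fun b => by
  unfold aId; exact lvl1_glue _ _ _ _

theorem haSw : ∀ b, lvl1 aSw b = some (!b) := fun b => by
  unfold aSw; exact lvl1_glue _ _ _ _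

theorem haF0 : lvl1 aF false = some false := by
  have h : lvl1 aF false = (if false = false then some false else none) := by
    unfold aF; exact lvl1_glue _ _ _ _
  rwa [if_pos rfl] at h

theorem haF1 : lvl1 aF true = none := by
  have h : lvl1 aF true = (if true = false then some false else none) := by
    unfold aF; exact lvl1_glue _ _ _ _
  rwa [if_neg (by simp)] at h

theorem haT1 : lvl1 aT true = some true := by
  have h : lvl1 aT true = (if true = true then some true else none) := by
    unfold aT; exact lvl1_glue _ _ _ _
  rwa [if_pos rfl] at h

theorem haT0 : lvl1 aT false = none := by
  have h : lvl1 aT false = (if false = true then some true else none) := by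
    unfold aT; exact lvl1_glue _ _ _ _
  rwa [if_neg (by simp)] at h

theorem mem_surv_single {x : PartialAut (0 + 1)} {b : Bool}
    (h : ∀ m, 1 ≤ m → lvl1 (x ^ m) b ≠ none) : [b] ∈ survSet x := by
  refine ⟨rfl, fun m hm hno => ?_⟩
  exact h m hm (lvl1_eq_none.2 hno)

theorem urk_ge_two {x : PartialAut (0 + 1)} (hf : [false] ∈ survSet x)
    (ht : [true] ∈ survSet x) : 2 ≤ urk x := by
  have hfin : (survSet x).Finite := (List.finite_length_eq Bool 1).subset fun l hl => hl.1
  have hsub : ({[false], [true]} : Set (List Bool)) ⊆ survSet x := by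
    rw [Set.insert_subset_iff, Set.singleton_subset_iff]
    exact ⟨hf, ht⟩
  calc 2 = ({[false], [true]} : Set (List Bool)).ncard := (Set.ncard_pair (by simp)).symm
    _ ≤ (survSet x).ncard := Set.ncard_le_ncard hsub hfin
    _ = urk x := by rw [← Nat.card_coe_set_eq]; rfl

theorem urk_ge_one {x : PartialAut (0 + 1)} {b : Bool} (hb : [b] ∈ survSet x) : 1 ≤ urk x := by
  have hfin : (survSet x).Finite := (List.finite_length_eq Bool 1).subset fun l hl => hl.1
  have hsub : ({[b]} : Set (List Bool)) ⊆ survSet x := Set.singleton_subset_iff.2 hb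
  calc 1 = ({[b]} : Set (List Bool)).ncard := (Set.ncard_singleton _).symm
    _ ≤ (survSet x).ncard := Set.ncard_le_ncard hsub hfin
    _ = urk x := by rw [← Nat.card_coe_set_eq]; rfl

theorem urk_aId : 2 ≤ urk aId := by
  refine urk_ge_two (mem_surv_single fun m _ => ?_) (mem_surv_single fun m _ => ?_) <;>
    rw [(lvl1_pow_fix (haId _) m).1] <;> exact Option.some_ne_none _

theorem urk_aSw : 2 ≤ urk aSw := by
  have key : ∀ m, ∀ b, lvl1 (aSw ^ m) b ≠ none := by
    intro m
    induction m with
    | zero => intro b; rw [pow_zero, lvl1_one]; exact Option.some_ne_none _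
    | succ m ih =>
      intro b
      rw [pow_succ', lvl1_mul, haSw b, Option.bind_some]
      exact ih (!b)
  exact urk_ge_two (mem_surv_single fun m _ => key m false)
    (mem_surv_single fun m _ => key m true)

theorem urk_aF : 1 ≤ urk aF := by
  refine urk_ge_one (b := false) (mem_surv_single fun m _ => ?_)
  rw [(lvl1_pow_fix haF0 m).1]
  exact Option.some_ne_none _

theorem urk_aT : 1 ≤ urk aT := by
  refine urk_ge_one (b := true) (mem_surv_single fun m _ => ?_)
  rw [(lvl1_pow_fix haT1 m).1]
  exact Option.some_ne_none _

theorem ne12 : aId ≠ aSw := fun h => by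
  have e : lvl1 aId false = lvl1 aSw false := congrArg (fun z => lvl1 z false) h
  rw [haId, haSw] at e
  cases e

theorem ne13 : aId ≠ aF := fun h => by
  have e : lvl1 aId true = lvl1 aF true := congrArg (fun z => lvl1 z true) h
  rw [haId, haF1] at e
  cases e

theorem ne14 : aId ≠ aT := fun h => by
  have e : lvl1 aId false = lvl1 aT false := congrArg (fun z => lvl1 z false) h
  rw [haId, haT0] at e
  cases e

theorem ne23 : aSw ≠ aF := fun h => by
  have e : lvl1 aSw true = lvl1 aF true := congrArg (fun z => lvl1 z true) h
  rw [haSw, haF1] at e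
  cases e

theorem ne24 : aSw ≠ aT := fun h => by
  have e : lvl1 aSw false = lvl1 aT false := congrArg (fun z => lvl1 z false) h
  rw [haSw, haT0] at e
  cases e

theorem ne34 : aF ≠ aT := fun h => by
  have e : lvl1 aF false = lvl1 aT false := congrArg (fun z => lvl1 z false) h
  rw [haF0, haT0] at e
  cases e

theorem Rn_one_ge : 6 ≤ Rn 1 := by
  classical
  have hle : (∑ x ∈ ({aId, aSw, aF, aT} : Finset (PartialAut (0 + 1))), urk x) ≤ Rn 1 := by
    rw [Rn]
    exact Finset.sum_le_sum_of_subset (Finset.subset_univ _)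
  have h4 : (∑ x ∈ ({aId, aSw, aF, aT} : Finset (PartialAut (0 + 1))), urk x) =
      urk aId + (urk aSw + (urk aF + urk aT)) := by
    rw [Finset.sum_insert (by
        simp only [Finset.mem_insert, Finset.mem_singleton]
        push_neg
        exact ⟨ne12, ne13, ne14⟩),
      Finset.sum_insert (by
        simp only [Finset.mem_insert, Finset.mem_singleton]
        push_neg
        exact ⟨ne23, ne24⟩),
      Finset.sum_insert (by
        simp only [Finset.mem_singleton]
        exact ne34),
      Finset.sum_singleton]
  have b1 := urk_aId
  have b2 := urk_aSw
  have b3 := urk_aF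
  have b4 := urk_aT
  omega

theorem pn_one_ge : (3/7 : ℝ) ≤ pn 1 := by
  rw [pn]
  have hN1' : Nn (0 + 1) = 7 := by
    rw [Nn_succ 0, Nn_zero]
    norm_num
  have hN1 : Nn 1 = 7 := hN1'
  rw [hN1]
  have hR : (6:ℝ) ≤ (Rn 1 : ℝ) := by exact_mod_cast Rn_one_ge
  rw [le_div_iff₀ (by norm_num)]
  push_cast
  linarith

end PnAux
/-- `p_n ≤ (3/4)^{n-1} p_1` for all `n ≥ 1`; in particular
`p_n → 0` as `n → ∞`. -/
theorem pn_exponential_decay :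
    (∀ n : ℕ, 1 ≤ n → pn n ≤ (3 / 4 : ℝ) ^ (n - 1) * pn 1) ∧
      Filter.Tendsto pn Filter.atTop (nhds 0) := by
  have hmain : ∀ n : ℕ, 1 ≤ n → pn n ≤ (3 / 4 : ℝ) ^ (n - 1) * pn 1 := by
    intro n hn
    calc pn n ≤ (3/4 : ℝ) ^ (n - 1) * (3/7) := PnAux.pn_le n hn
      _ ≤ (3/4 : ℝ) ^ (n - 1) * pn 1 :=
          mul_le_mul_of_nonneg_left PnAux.pn_one_ge (by positivity)
  refine ⟨hmain, ?_⟩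
  have h0 : ∀ n, 0 ≤ pn n := fun n => by
    unfold pn
    positivity
  apply squeeze_zero' (g := fun n : ℕ => (3/4 : ℝ) ^ (n - 1) * pn 1)
  · exact Filter.Eventually.of_forall h0
  · filter_upwards [Filter.eventually_ge_atTop 1] with n hn using hmain n hn
  · have h1 : Filter.Tendsto (fun m : ℕ => (3/4 : ℝ) ^ m) Filter.atTop (nhds 0) :=
      tendsto_pow_atTop_nhds_zero_of_lt_one (by norm_num) (by norm_num)
    have h2 : Filter.Tendsto (fun n : ℕ => n - 1) Filter.atTop Filter.atTop :=
      Filter.tendsto_atTop_atTop.2 fun b => ⟨b + 1, fun a ha => by omega⟩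
    have h3 := (h1.comp h2).mul_const (pn 1)
    simpa using h3
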